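/- arXiv:1806.08261 — 10 statements merged into one kernel-verified Lean document; each statement's English description precedes it below -/
import Mathlib

section
/- For every integer m > 1, the zero-divisor graph Γ(ℤ_{2^m}[i]) of the ring of Gaussian integers modulo 2^m is not pancyclic. -/
open SimpleGraph

/-- The set of nonzero zero-divisors of a commutative ring. -/
def zdVertex (R : Type*) [CommRing R] : Set R :=
  {x | x ≠ 0 ∧ ∃ y, y ≠ 0 ∧ x * y = 0}

/-- The zero-divisor graph `Γ(R)` of a commutative ring: vertices are the nonzero
zero-divisors, and distinct vertices are adjacent iff their product is zero. -/
def zdGraph (R : Type*) [CommRing R] : SimpleGraph (zdVertex R) where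
  Adj x y := x ≠ y ∧ (x : R) * y = 0
  symm := ⟨fun x y ⟨h1, h2⟩ => ⟨h1.symm, by rwa [mul_comm]⟩⟩
  loopless := ⟨fun x ⟨h1, _⟩ => h1 rfl⟩

/-- The ring of Gaussian integers modulo `n`, i.e. `ℤ[i]/⟨n⟩`. -/
abbrev Zi (n : ℕ) : Type := GaussianInt ⧸ Ideal.span ({(n : GaussianInt)} : Set GaussianInt)

/-- `G` contains a cycle of length `n`. -/
def HasCycleLength {V : Type*} (G : SimpleGraph V) (n : ℕ) : Prop :=
  ∃ (a : V) (p : G.Walk a a), p.IsCycle ∧ p.length = n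

/-- A graph of order `≥ 3` is pancyclic if it contains cycles of every length
from `3` to its order. -/
def Pancyclic {V : Type*} (G : SimpleGraph V) : Prop :=
  3 ≤ Nat.card V ∧ ∀ k, 3 ≤ k → k ≤ Nat.card V → HasCycleLength G k

/-- A graph is bipancyclic if it contains cycles of every even length from `4`
to its order. -/
def Bipancyclic {V : Type*} (G : SimpleGraph V) : Prop :=
  4 ≤ Nat.card V ∧ ∀ k, Even k → 4 ≤ k → k ≤ Nat.card V → HasCycleLength G k

/-- A graph is Hamiltonian if it contains a cycle passing through every vertex. -/
def IsHamiltonianGraph {V : Type*} (G : SimpleGraph V) : Prop :=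
  ∃ (a : V) (p : G.Walk a a), p.IsCycle ∧ ∀ v, v ∈ p.support


/-! In `ℤ[i]` we have `2^m = 2^(m-1)(1 - i) · (1 + i)`, and every Gaussian integer is `≡ 0` or
`≡ 1` modulo `1 + i`. Cancelling `1 + i` shows that the only nonzero element killed by `1 + i`
in `ℤ_{2^m}[i]` is the class of `2^(m-1)(1 - i)`, so the vertex `1 + i` of the zero-divisor graph
has a single neighbour. A vertex of degree at most one lies on no cycle, whereas a cycle whose
length is the order of the graph passes through every vertex. -/

namespace SimpleGraph

variable {V : Type*} {G : SimpleGraph V}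

lemma Walk.IsCycle.notMem_support_of_subsingleton_neighborSet {u v : V} {p : G.Walk u u}
    (hp : p.IsCycle) (hv : (G.neighborSet v).Subsingleton) : v ∉ p.support := by
  intro hmem
  obtain ⟨a, b, hab, hnbrs⟩ := Set.ncard_eq_two.mp (hp.ncard_neighborSet_toSubgraph_eq_two hmem)
  have hsub := p.toSubgraph.neighborSet_subset v
  rw [hnbrs] at hsub
  exact hab (hv (hsub (by simp)) (hsub (by simp)))

lemma not_pancyclic_of_subsingleton_neighborSet (v : V) (hv : (G.neighborSet v).Subsingleton) :
    ¬ Pancyclic G := by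
  classical
  rintro ⟨hcard, hcycle⟩
  obtain ⟨a, p, hp, hlen⟩ := hcycle _ hcard le_rfl
  have : Finite V := Nat.finite_of_card_ne_zero (by omega)
  have := Fintype.ofFinite V
  have hham : p.IsHamiltonianCycle :=
    Walk.isHamiltonianCycle_iff_isCycle_and_length_eq.mpr ⟨hp, hlen.trans Nat.card_eq_fintype_card⟩
  exact hp.notMem_support_of_subsingleton_neighborSet hv (hham.mem_support v)

end SimpleGraph

lemma zdGraph_neighborSet_subsingleton {R : Type*} [CommRing R] (x : zdVertex R) (d : R)
    (h : ∀ y : R, (x : R) * y = 0 → y = 0 ∨ y = d) : ((zdGraph R).neighborSet x).Subsingleton := by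
  have hd : ∀ y ∈ (zdGraph R).neighborSet x, (y : R) = d := fun y hy ↦ (h y hy.2).resolve_left y.2.1
  exact fun y hy z hz ↦ Subtype.ext ((hd y hy).trans (hd z hz).symm)

section QuotientSpanMul

variable {R : Type*} [CommRing R] [IsDomain R] {ω N : R}

lemma dvd_or_dvd_sub_of_mul_dvd_mul (hω0 : ω ≠ 0) (hres : ∀ z, ω ∣ z ∨ ω ∣ z - 1) {y : R}
    (h : N * ω ∣ ω * y) : N * ω ∣ y ∨ N * ω ∣ y - N := by
  rw [mul_comm N] at h
  obtain ⟨z, rfl⟩ := (mul_dvd_mul_iff_left hω0).mp h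
  rcases hres z with ⟨w, rfl⟩ | ⟨w, hw⟩
  · exact Or.inl ⟨w, by ring⟩
  · exact Or.inr ⟨w, by rw [← mul_sub_one, hw]; ring⟩

lemma Ideal.Quotient.eq_zero_or_eq_mk_of_mk_mul_eq_zero (hω0 : ω ≠ 0)
    (hres : ∀ z, ω ∣ z ∨ ω ∣ z - 1) (y : R ⧸ Ideal.span {N * ω})
    (h : Ideal.Quotient.mk _ ω * y = 0) : y = 0 ∨ y = Ideal.Quotient.mk _ N := by
  obtain ⟨y, rfl⟩ := Ideal.Quotient.mk_surjective y
  simp only [← map_mul, Ideal.Quotient.eq_zero_iff_mem, Ideal.Quotient.eq,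
    Ideal.mem_span_singleton] at h ⊢
  exact dvd_or_dvd_sub_of_mul_dvd_mul hω0 hres h

lemma Ideal.Quotient.mk_mem_zdVertex (hω0 : ω ≠ 0) (hN0 : N ≠ 0) (hω : ¬IsUnit ω)
    (hN : ¬IsUnit N) : Ideal.Quotient.mk (Ideal.span {N * ω}) ω ∈ zdVertex _ := by
  refine ⟨?_, Ideal.Quotient.mk _ N, ?_, ?_⟩
  all_goals simp only [ne_eq, ← map_mul, Ideal.Quotient.eq_zero_iff_mem, Ideal.mem_span_singleton]
  · exact fun h ↦ hN (isUnit_of_dvd_one ((mul_dvd_mul_iff_right hω0).mp (by rwa [one_mul])))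
  · exact fun h ↦ hω (isUnit_of_dvd_one ((mul_dvd_mul_iff_left hN0).mp (by rwa [mul_one])))
  · rw [mul_comm]

theorem not_pancyclic_zdGraph_quotient_span_mul (hω0 : ω ≠ 0) (hN0 : N ≠ 0) (hω : ¬IsUnit ω)
    (hN : ¬IsUnit N) (hres : ∀ z, ω ∣ z ∨ ω ∣ z - 1) :
    ¬ Pancyclic (zdGraph (R ⧸ Ideal.span {N * ω})) :=
  SimpleGraph.not_pancyclic_of_subsingleton_neighborSet
    ⟨_, Ideal.Quotient.mk_mem_zdVertex hω0 hN0 hω hN⟩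
    (zdGraph_neighborSet_subsingleton _ _
      (Ideal.Quotient.eq_zero_or_eq_mk_of_mk_mul_eq_zero hω0 hres))

end QuotientSpanMul

namespace GaussianInt

lemma one_add_I_dvd_of_even {z : GaussianInt} (h : Even (z.re + z.im)) :
    (⟨1, 1⟩ : GaussianInt) ∣ z := by
  obtain ⟨t, ht⟩ := h
  exact ⟨⟨(z.re + z.im) / 2, (z.im - z.re) / 2⟩, by ext <;> simp <;> omega⟩

lemma one_add_I_dvd_or_dvd_sub_one (z : GaussianInt) :
    (⟨1, 1⟩ : GaussianInt) ∣ z ∨ ⟨1, 1⟩ ∣ z - 1 := by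
  rcases Int.even_or_odd (z.re + z.im) with he | ⟨t, ht⟩
  · exact Or.inl (one_add_I_dvd_of_even he)
  · exact Or.inr (one_add_I_dvd_of_even ⟨t, by simp; omega⟩)

lemma not_isUnit_of_norm_eq_two {z : GaussianInt} (h : z.norm = 2) : ¬IsUnit z := by
  rw [Zsqrtd.isUnit_iff_norm_isUnit, h, Int.isUnit_iff]
  omega

lemma two_pow_eq_mul_one_add_I {m : ℕ} (hm : 1 ≤ m) :
    ((2 ^ m : ℕ) : GaussianInt) = 2 ^ (m - 1) * ⟨1, -1⟩ * ⟨1, 1⟩ := by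
  have h2 : (⟨1, -1⟩ * ⟨1, 1⟩ : GaussianInt) = 2 := by ext <;> simp
  rw [mul_assoc, h2, ← pow_succ, Nat.sub_add_cancel hm]
  push_cast
  rfl

end GaussianInt

theorem stmt0 (m : ℕ) (hm : 1 < m) : ¬ Pancyclic (zdGraph (Zi (2 ^ m))) := by
  have hω0 : (⟨1, 1⟩ : GaussianInt) ≠ 0 := by decide
  have hω := GaussianInt.not_isUnit_of_norm_eq_two (z := ⟨1, 1⟩) rfl
  have hconj := GaussianInt.not_isUnit_of_norm_eq_two (z := ⟨1, -1⟩) rfl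
  unfold Zi
  rw [GaussianInt.two_pow_eq_mul_one_add_I hm.le]
  exact not_pancyclic_zdGraph_quotient_span_mul hω0
    (mul_ne_zero (pow_ne_zero _ two_ne_zero) (by decide)) hω
    (fun h ↦ hconj (isUnit_of_mul_isUnit_right h)) GaussianInt.one_add_I_dvd_or_dvd_sub_one
end

section
/- For m > 1, the zero-divisor graph Γ(ℤ_{2^m}[i]) has exactly 2^{2m-2} vertices of degree 1 (pendant vertices). -/
open SimpleGraph

/-!
In `ℤ[i]` the prime `π = 1 + i` has residue field `𝔽₂` and `2 ~ π ^ 2`, so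
`ℤ_{2^m}[i] = ℤ[i]/(π ^ 2m)`. In `A/(p ^ n)` with `n ≥ 3` and `|A/(p)| = 2` the pendant
vertices are exactly the classes of elements of `p`-valuation one: `p * u` has the single
neighbour `p ^ (n - 1)` (every nonzero annihilator is `p ^ (n - 1)` times a unit, which is
`≡ 1 mod p`), units have no neighbour, and an element divisible by `p ^ 2` is annihilated by the
three distinct classes `p ^ (n - 2) * c`, `c ∈ {1, p, 1 + p}`, at least two of which differ from
it. The elements of `π`-valuation one are the `a + b i` with `a` and `b` odd, and there are
`2 ^ (m - 1) * 2 ^ (m - 1)` of them.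
-/

section ZeroDivisorGraph

variable {R : Type*} [CommRing R]

def IsZdPendant (x : R) : Prop :=
  x ≠ 0 ∧ ∃ y, {z : R | z ≠ 0 ∧ z ≠ x ∧ x * z = 0} = {y}

def zdGraph.neighborSetEquiv (v : zdVertex R) :
    (zdGraph R).neighborSet v ≃ {z : R | z ≠ 0 ∧ z ≠ v ∧ (v : R) * z = 0} where
  toFun w := ⟨w.1, w.1.2.1, fun h => w.2.1 (Subtype.ext h).symm, w.2.2⟩
  invFun z := ⟨⟨z, z.2.1, v, v.2.1, by rw [mul_comm]; exact z.2.2.2⟩,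
    fun h => z.2.2.1 (congrArg Subtype.val h).symm, z.2.2.2⟩
  left_inv _ := rfl
  right_inv _ := rfl

theorem card_zdGraph_pendant :
    Nat.card {v : zdVertex R // Nat.card ((zdGraph R).neighborSet v) = 1} =
      Nat.card {x : R // IsZdPendant x} := by
  simp_rw [Nat.card_congr (zdGraph.neighborSetEquiv _), Nat.card_coe_set_eq, Set.ncard_eq_one]
  refine Nat.card_congr ((Equiv.subtypeSubtypeEquivSubtypeInter (· ∈ zdVertex R)
    fun x => ∃ y, {z : R | z ≠ 0 ∧ z ≠ x ∧ x * z = 0} = {y}).trans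
    (Equiv.subtypeEquivRight fun x => ?_))
  constructor
  · rintro ⟨hx, h⟩
    exact ⟨hx.1, h⟩
  · rintro ⟨hx, y, hy⟩
    obtain ⟨hy0, -, hxy⟩ := (Set.ext_iff.1 hy y).2 rfl
    exact ⟨⟨hx, y, hy0, hxy⟩, y, hy⟩

end ZeroDivisorGraph

section PrimePowerQuotient

variable {A : Type*} [CommRing A] {p : A}

theorem mk_span_pow_eq_zero_iff {n : ℕ} {x : A} :
    Ideal.Quotient.mk (Ideal.span {p ^ n}) x = 0 ↔ p ^ n ∣ x := by
  rw [Ideal.Quotient.eq_zero_iff_mem, Ideal.mem_span_singleton]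

theorem mk_span_pow_eq_mk_iff {n : ℕ} {x y : A} :
    Ideal.Quotient.mk (Ideal.span {p ^ n}) x = Ideal.Quotient.mk _ y ↔ p ^ n ∣ x - y := by
  rw [Ideal.Quotient.eq, Ideal.mem_span_singleton]

variable [IsDomain A]

theorem pow_add_dvd_pow_mul_iff (hp : p ≠ 0) {a b : ℕ} {c : A} :
    p ^ (a + b) ∣ p ^ a * c ↔ p ^ b ∣ c := by
  rw [pow_add, mul_dvd_mul_iff_left (pow_ne_zero a hp)]

theorem not_isZdPendant_mk_of_not_dvd (hp : Prime p) {n : ℕ} {x : A} (hx : ¬ p ∣ x) :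
    ¬ IsZdPendant (Ideal.Quotient.mk (Ideal.span {p ^ n}) x) := by
  rintro ⟨-, y, hy⟩
  obtain ⟨z, rfl⟩ := Ideal.Quotient.mk_surjective y
  obtain ⟨hz, -, hxz⟩ := (Set.ext_iff.1 hy _).2 rfl
  rw [← map_mul, mk_span_pow_eq_zero_iff] at hxz
  exact hz (mk_span_pow_eq_zero_iff.2 (hp.pow_dvd_of_dvd_mul_left n hx hxz))

theorem not_isZdPendant_mk_of_sq_dvd (hp : Prime p) {n : ℕ} (hn : 2 ≤ n) {x : A}
    (hx : p ^ 2 ∣ x) : ¬ IsZdPendant (Ideal.Quotient.mk (Ideal.span {p ^ n}) x) := by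
  obtain ⟨k, rfl⟩ := Nat.exists_eq_add_of_le' hn
  set Q := Ideal.Quotient.mk (Ideal.span {p ^ (k + 2)})
  have hsq : ∀ {c : A}, ¬ p ∣ c → ¬ p ^ 2 ∣ c := fun hc h =>
    hc ((dvd_pow_self p two_ne_zero).trans h)
  have h1 : ¬ p ^ 2 ∣ 1 := hsq hp.not_dvd_one
  have hp2 : ¬ p ^ 2 ∣ p := fun h => hp.not_dvd_one <|
    (mul_dvd_mul_iff_left hp.ne_zero).1 (by rwa [mul_one, ← pow_two])
  have h1p : ¬ p ^ 2 ∣ 1 + p := hsq <| by rw [dvd_add_left (dvd_refl p)]; exact hp.not_dvd_one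
  have hne : ∀ {c}, ¬ p ^ 2 ∣ c → Q (p ^ k * c) ≠ 0 := fun hc h =>
    hc ((pow_add_dvd_pow_mul_iff hp.ne_zero).1 (mk_span_pow_eq_zero_iff.1 h))
  have hinj : ∀ {c d}, ¬ p ^ 2 ∣ c - d → Q (p ^ k * c) ≠ Q (p ^ k * d) := fun hcd h => hcd <|
    (pow_add_dvd_pow_mul_iff hp.ne_zero).1 (by rw [mul_sub]; exact mk_span_pow_eq_mk_iff.1 h)
  have hann : ∀ c, Q x * Q (p ^ k * c) = 0 := fun c => by
    obtain ⟨w, rfl⟩ := hx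
    rw [← map_mul, mk_span_pow_eq_zero_iff]
    exact ⟨w * c, by ring⟩
  rintro ⟨-, y, hy⟩
  have hnbr : ∀ {c}, ¬ p ^ 2 ∣ c → Q (p ^ k * c) = y ∨ Q (p ^ k * c) = Q x := by
    intro c hc
    by_cases h : Q (p ^ k * c) = Q x
    · exact Or.inr h
    · exact Or.inl ((Set.ext_iff.1 hy _).1 ⟨hne hc, h, hann c⟩)
  have d1 : ¬ p ^ 2 ∣ 1 - p := hsq <| by rw [dvd_sub_left (dvd_refl p)]; exact hp.not_dvd_one
  have d2 : ¬ p ^ 2 ∣ 1 - (1 + p) := by simpa using hp2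
  have d3 : ¬ p ^ 2 ∣ p - (1 + p) := by simpa using h1
  have hne₁₂ := hinj d1
  have hne₁₃ := hinj d2
  have hne₂₃ := hinj d3
  -- three pairwise distinct classes cannot all lie in `{y, Q x}`
  rcases hnbr h1 with h | h <;> rcases hnbr hp2 with h' | h' <;>
    rcases hnbr h1p with h'' | h'' <;> simp_all

theorem isZdPendant_mk_of_dvd_of_not_sq_dvd (hp : Prime p) (hres : ∀ c, ¬ p ∣ c → p ∣ c - 1)
    {n : ℕ} (hn : 3 ≤ n) {x : A} (hx : p ∣ x) (hx2 : ¬ p ^ 2 ∣ x) :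
    IsZdPendant (Ideal.Quotient.mk (Ideal.span {p ^ n}) x) := by
  obtain ⟨k, rfl⟩ := Nat.exists_eq_add_of_le' hn
  obtain ⟨u, rfl⟩ := hx
  set Q := Ideal.Quotient.mk (Ideal.span {p ^ (k + 3)})
  have hu : ¬ p ∣ u := fun h => hx2 (by rw [pow_two]; exact mul_dvd_mul_left p h)
  have hshift : ∀ {b c}, p ^ (b + 1) ∣ p * c ↔ p ^ b ∣ c := by
    intro b c
    rw [pow_succ', mul_dvd_mul_iff_left hp.ne_zero]
  have hann : ∀ {c}, Q (p * u) * Q c = 0 ↔ p ^ (k + 2) ∣ c := fun {c} => by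
    rw [← map_mul, mk_span_pow_eq_zero_iff, mul_assoc, hshift]
    exact ⟨hp.pow_dvd_of_dvd_mul_left _ hu, (Dvd.dvd.mul_left · u)⟩
  have hpk : ¬ p ^ (k + 3) ∣ p ^ (k + 2) := by
    rw [pow_dvd_pow_iff hp.ne_zero hp.not_isUnit]; omega
  refine ⟨fun h => hu ?_, Q (p ^ (k + 2)), Set.eq_singleton_iff_unique_mem.2 ⟨⟨?_, ?_, ?_⟩, ?_⟩⟩
  · exact (dvd_pow_self p (by omega)).trans (hshift.1 (mk_span_pow_eq_zero_iff.1 h))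
  · exact fun h => hpk (mk_span_pow_eq_zero_iff.1 h)
  · rw [Ne, mk_span_pow_eq_mk_iff, pow_succ' p (k + 1), ← mul_sub, hshift]
    exact fun h => hu <| (dvd_sub_right (dvd_pow_self p k.succ_ne_zero)).1 <|
      (dvd_pow_self p (k + 1).succ_ne_zero).trans h
  · exact hann.2 dvd_rfl
  · rintro z ⟨hz, -, hxz⟩
    obtain ⟨c, rfl⟩ := Ideal.Quotient.mk_surjective z
    obtain ⟨d, rfl⟩ := hann.1 hxz
    have hd : ¬ p ∣ d := fun h => hz <| mk_span_pow_eq_zero_iff.2 <|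
      (pow_add_dvd_pow_mul_iff hp.ne_zero (b := 1)).2 (by rwa [pow_one])
    rw [mk_span_pow_eq_mk_iff, ← mul_sub_one]
    exact (pow_add_dvd_pow_mul_iff hp.ne_zero (b := 1)).2 (by rw [pow_one]; exact hres d hd)

theorem isZdPendant_mk_iff (hp : Prime p) (hres : ∀ c, ¬ p ∣ c → p ∣ c - 1) {n : ℕ}
    (hn : 3 ≤ n) {I : Ideal A} (hI : I = Ideal.span {p ^ n}) (x : A) :
    IsZdPendant (Ideal.Quotient.mk I x) ↔ p ∣ x ∧ ¬ p ^ 2 ∣ x := by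
  subst hI
  refine ⟨fun h => ⟨?_, fun hx => not_isZdPendant_mk_of_sq_dvd hp (by omega) hx h⟩,
    fun h => isZdPendant_mk_of_dvd_of_not_sq_dvd hp hres hn h.1 h.2⟩
  by_contra hx
  exact not_isZdPendant_mk_of_not_dvd hp hx h

end PrimePowerQuotient

namespace GaussianInt

def oneAddI : GaussianInt := ⟨1, 1⟩

theorem oneAddI_dvd_iff (z : GaussianInt) : oneAddI ∣ z ↔ 2 ∣ z.re + z.im := by
  constructor
  · rintro ⟨w, rfl⟩
    exact ⟨w.re, by simp [oneAddI]; ring⟩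
  · rintro ⟨c, hc⟩
    exact ⟨⟨c, c - z.re⟩, by ext <;> simp [oneAddI]; linarith⟩

theorem associated_two_oneAddI_sq : Associated (2 : GaussianInt) (oneAddI ^ 2) :=
  ⟨⟨⟨0, 1⟩, ⟨0, -1⟩, by decide, by decide⟩, by decide⟩

theorem oneAddI_sq_dvd_iff (z : GaussianInt) :
    oneAddI ^ 2 ∣ z ↔ 2 ∣ z.re ∧ 2 ∣ z.im := by
  rw [← associated_two_oneAddI_sq.dvd_iff_dvd_left,
    show (2 : GaussianInt) = ((2 : ℤ) : GaussianInt) by norm_num, Zsqrtd.intCast_dvd]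

theorem prime_oneAddI : Prime oneAddI := by
  have h1 : ¬ oneAddI ∣ 1 := by rw [oneAddI_dvd_iff]; decide
  refine ⟨by decide, fun hu => h1 hu.dvd, fun a b hab => ?_⟩
  simp only [oneAddI_dvd_iff] at hab ⊢
  have : 2 ∣ (a.re + a.im) * (b.re + b.im) :=
    (dvd_sub_right hab).1 ⟨-a.im * b.im, by simp; ring⟩
  exact Int.prime_two.dvd_or_dvd this

theorem oneAddI_dvd_sub_one_of_not_dvd (z : GaussianInt) (hz : ¬ oneAddI ∣ z) :
    oneAddI ∣ z - 1 := by
  rw [oneAddI_dvd_iff] at hz ⊢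
  simp only [Zsqrtd.re_sub, Zsqrtd.im_sub, Zsqrtd.re_one, Zsqrtd.im_one]
  omega

theorem span_two_pow_eq_span_oneAddI_pow (m : ℕ) :
    Ideal.span {((2 ^ m : ℕ) : GaussianInt)} = Ideal.span {oneAddI ^ (2 * m)} := by
  rw [Ideal.span_singleton_eq_span_singleton, pow_mul, Nat.cast_pow, Nat.cast_ofNat]
  exact associated_two_oneAddI_sq.pow_pow

theorem oneAddI_dvd_and_not_sq_dvd_iff (z : GaussianInt) :
    oneAddI ∣ z ∧ ¬ oneAddI ^ 2 ∣ z ↔ Odd z.re ∧ Odd z.im := by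
  simp only [oneAddI_dvd_iff, oneAddI_sq_dvd_iff, Int.odd_iff]
  omega

theorem mk_zmod_val_bijective (n : ℕ) [NeZero n] :
    Function.Bijective fun q : ZMod n × ZMod n =>
      Ideal.Quotient.mk (Ideal.span {(n : GaussianInt)}) ⟨q.1.val, q.2.val⟩ := by
  have hmk : ∀ z w : GaussianInt, Ideal.Quotient.mk (Ideal.span {(n : GaussianInt)}) z =
      Ideal.Quotient.mk _ w ↔ (n : ℤ) ∣ z.re - w.re ∧ (n : ℤ) ∣ z.im - w.im := fun z w => by
    rw [Ideal.Quotient.eq, Ideal.mem_span_singleton, ← Int.cast_natCast, Zsqrtd.intCast_dvd]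
    rfl
  have hval : ∀ a c : ZMod n, (n : ℤ) ∣ (a.val : ℤ) - c.val → a = c := fun a c h => by
    simpa using ((ZMod.intCast_eq_intCast_iff_dvd_sub _ _ n).2 h).symm
  refine ⟨fun q q' h => ?_, fun x => ?_⟩
  · obtain ⟨h1, h2⟩ := (hmk _ _).1 h
    exact Prod.ext (hval _ _ h1) (hval _ _ h2)
  · obtain ⟨z, rfl⟩ := Ideal.Quotient.mk_surjective x
    refine ⟨((z.re : ZMod n), (z.im : ZMod n)), (hmk _ _).2 ⟨?_, ?_⟩⟩ <;>
      exact ⟨-(_ / n), by simp only [ZMod.val_intCast, Int.emod_def]; ring⟩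

end GaussianInt

theorem ZMod.isUnit_iff_odd_val {m : ℕ} (hm : m ≠ 0) (a : ZMod (2 ^ m)) :
    IsUnit a ↔ Odd (a.val : ℤ) := by
  rw [Int.odd_coe_nat, ← Nat.coprime_two_right,
    ← Nat.coprime_pow_right_iff (Nat.pos_of_ne_zero hm), ← ZMod.isUnit_iff_coprime,
    ZMod.natCast_val, ZMod.cast_id]

theorem ZMod.card_isUnit_two_pow {m : ℕ} (hm : m ≠ 0) :
    Nat.card {a : ZMod (2 ^ m) // IsUnit a} = 2 ^ (m - 1) := by
  have : NeZero (2 ^ m) := ⟨by positivity⟩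
  calc Nat.card {a : ZMod (2 ^ m) // IsUnit a} = Nat.card (ZMod (2 ^ m))ˣ :=
        (Nat.card_congr Submonoid.unitsTypeEquivIsUnitSubmonoid.toEquiv).symm
    _ = 2 ^ (m - 1) := by
      rw [Nat.card_eq_fintype_card, ZMod.card_units_eq_totient,
        Nat.totient_prime_pow Nat.prime_two (Nat.pos_of_ne_zero hm)]
      simp

theorem stmt1 (m : ℕ) (hm : 1 < m) :
    Nat.card {v : zdVertex (Zi (2 ^ m)) //
      Nat.card ((zdGraph (Zi (2 ^ m))).neighborSet v) = 1} = 2 ^ (2 * m - 2) := by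
  have hpendant : ∀ q : ZMod (2 ^ m) × ZMod (2 ^ m), IsUnit q.1 ∧ IsUnit q.2 ↔
      IsZdPendant (Ideal.Quotient.mk (Ideal.span {((2 ^ m : ℕ) : GaussianInt)})
        ⟨q.1.val, q.2.val⟩) := fun q => by
    rw [isZdPendant_mk_iff GaussianInt.prime_oneAddI GaussianInt.oneAddI_dvd_sub_one_of_not_dvd
      (by omega) (GaussianInt.span_two_pow_eq_span_oneAddI_pow m),
      GaussianInt.oneAddI_dvd_and_not_sq_dvd_iff, ZMod.isUnit_iff_odd_val (by omega),
      ZMod.isUnit_iff_odd_val (by omega)]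
  let e := Equiv.ofBijective _ (GaussianInt.mk_zmod_val_bijective (2 ^ m))
  rw [card_zdGraph_pendant, ← Nat.card_congr (e.subtypeEquiv hpendant),
    Nat.card_congr Equiv.subtypeProdEquivProd, Nat.card_prod, ZMod.card_isUnit_two_pow (by omega),
    ← pow_add]
  congr 1
  omega
end

section
/- The zero-divisor graph Γ(ℤ_{2^m}[i]) has exactly 2^{2m-1} − 1 vertices. -/
open SimpleGraph

/-!
Since `2 = -i (1 + i) ^ 2`, the ring `ℤ[i]/⟨2^m⟩` is `ℤ[i]/𝔭^{2m}` for the maximal ideal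
`𝔭 = ⟨1 + i⟩` with residue field `𝔽₂`. In a finite ring the nonzero zero-divisors are the nonzero
non-units, and in `ℤ[i]/𝔭^{2m}` the non-units are the kernel of the reduction to `𝔽₂`, a subgroup
of index `2` in a ring of order `4^m`. This leaves `4^m / 2 - 1` vertices.
-/

theorem zdVertex_eq_of_finite (R : Type*) [CommRing R] [Finite R] :
    zdVertex R = {x | x ≠ 0 ∧ ¬IsUnit x} := by
  ext x
  simp [zdVertex, isUnit_iff_mem_nonZeroDivisors_of_finite, mem_nonZeroDivisors_iff_right,
    mul_comm, and_comm]

theorem card_zdVertex_add_one_mul {R S : Type*} [CommRing R] [Finite R] [Ring S]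
    (f : R →+* S) (hf : Function.Surjective f) (hunit : ∀ x, IsUnit x ↔ f x ≠ 0) :
    (Nat.card (zdVertex R) + 1) * Nat.card S = Nat.card R := by
  have hzd : zdVertex R = (RingHom.ker f : Set R) \ {0} := by
    ext x
    simp [zdVertex_eq_of_finite, hunit, and_comm]
  have hker := (f : R →+ S).ker.card_mul_index
  rw [AddSubgroup.index_ker, AddMonoidHom.range_eq_top_of_surjective _ hf,
    AddSubgroup.card_top] at hker
  rw [Nat.card_coe_set_eq, hzd, Set.ncard_sdiff_singleton_add_one (zero_mem _) (Set.toFinite _)]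
  exact hker

namespace Zsqrtd

variable (d : ℤ)

noncomputable def basis : Module.Basis (Fin 2) ℤ (ℤ√d) := .ofEquivFun
  { toFun z := ![z.re, z.im]
    invFun v := ⟨v 0, v 1⟩
    map_add' z w := by ext i; fin_cases i <;> rfl
    map_smul' n z := by ext i; fin_cases i <;> simp
    left_inv z := rfl
    right_inv v := by ext i; fin_cases i <;> rfl }

instance : Module.Free ℤ (ℤ√d) := .of_basis (basis d)

instance : Module.Finite ℤ (ℤ√d) := .of_basis (basis d)

theorem finrank_eq_two : Module.finrank ℤ (ℤ√d) = 2 := by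
  simp [Module.finrank_eq_card_basis (basis d)]

end Zsqrtd

namespace GaussianInt

theorem card_quotient_span_natCast (n : ℕ) :
    Nat.card (GaussianInt ⧸ Ideal.span {(n : GaussianInt)}) = n ^ 2 := by
  rw [← Submodule.cardQuot_apply, ← Ideal.absNorm_apply, Ideal.absNorm_span_natCast,
    Zsqrtd.finrank_eq_two]

/-- Reduction modulo the prime `1 + i` (written `⟨1, 1⟩` below), sending `i` to `1`. -/
def toZModTwo : GaussianInt →+* ZMod 2 := Zsqrtd.lift ⟨1, by decide⟩

theorem toZModTwo_apply (x : GaussianInt) : toZModTwo x = ((x.re + x.im : ℤ) : ZMod 2) := by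
  simp [toZModTwo, Zsqrtd.lift_apply_apply]

theorem toZModTwo_surjective : Function.Surjective toZModTwo :=
  fun c => ⟨c.val, by simp⟩

theorem ker_toZModTwo : RingHom.ker toZModTwo = Ideal.span {⟨1, 1⟩} := by
  ext x
  rw [RingHom.mem_ker, toZModTwo_apply, ZMod.intCast_zmod_eq_zero_iff_dvd, Ideal.mem_span_singleton]
  constructor
  · rintro ⟨k, hk⟩
    exact ⟨⟨k, k - x.re⟩, by ext <;> simp; omega⟩
  · rintro ⟨y, rfl⟩
    exact ⟨y.re, by simp; ring⟩

theorem isMaximal_span_one_add_I : (Ideal.span {(⟨1, 1⟩ : GaussianInt)}).IsMaximal := by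
  rw [← ker_toZModTwo]
  exact RingHom.ker_isMaximal_of_surjective _ toZModTwo_surjective

theorem span_natCast_two_pow (m : ℕ) :
    Ideal.span {((2 ^ m : ℕ) : GaussianInt)} = Ideal.span {⟨1, 1⟩} ^ (2 * m) := by
  rw [Ideal.span_singleton_pow, Ideal.span_singleton_eq_span_singleton, pow_mul]
  push_cast
  -- `(1 + i) ^ 2 = 2 * i`
  exact .pow_pow (associated_of_dvd_dvd ⟨⟨0, 1⟩, by decide⟩ ⟨⟨0, -1⟩, by decide⟩)

theorem isUnit_mk_span_natCast_two_pow_iff {m : ℕ} (hm : m ≠ 0) (x : GaussianInt) :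
    IsUnit (Ideal.Quotient.mk (Ideal.span {((2 ^ m : ℕ) : GaussianInt)}) x) ↔
      toZModTwo x ≠ 0 := by
  have := isMaximal_span_one_add_I
  rw [span_natCast_two_pow, Ideal.Quotient.isUnit_mk_pow_iff_notMem _ (by omega),
    ← ker_toZModTwo, RingHom.mem_ker]

end GaussianInt

open GaussianInt in
theorem stmt2 (m : ℕ) (hm : 1 ≤ m) :
    Nat.card (zdVertex (Zi (2 ^ m))) = 2 ^ (2 * m - 1) - 1 := by
  have hcard : Nat.card (Zi (2 ^ m)) = (2 ^ m) ^ 2 := card_quotient_span_natCast _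
  have : Finite (Zi (2 ^ m)) := Nat.finite_of_card_ne_zero (by rw [hcard]; positivity)
  have hle : Ideal.span {((2 ^ m : ℕ) : GaussianInt)} ≤ RingHom.ker toZModTwo := by
    rw [span_natCast_two_pow, ker_toZModTwo]
    exact Ideal.pow_le_self (by omega)
  let ψ : Zi (2 ^ m) →+* ZMod 2 := Ideal.Quotient.lift _ toZModTwo hle
  have hunit (y : Zi (2 ^ m)) : IsUnit y ↔ ψ y ≠ 0 := by
    obtain ⟨x, rfl⟩ := Ideal.Quotient.mk_surjective y
    exact isUnit_mk_span_natCast_two_pow_iff (by omega) x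
  have hzd := card_zdVertex_add_one_mul ψ
    (Ideal.Quotient.lift_surjective_of_surjective _ _ toZModTwo_surjective) hunit
  rw [hcard, Nat.card_zmod, ← pow_mul, mul_comm m, ← Nat.sub_add_cancel (by omega : 1 ≤ 2 * m),
    pow_succ] at hzd
  omega
end

section
/- Let q be a prime with q ≡ 3 (mod 4) and m ≥ 1. The zero-divisor graph Γ(ℤ_{q^m}[i]) is pancyclic if and only if m = 2. -/
/-!
Since `q` is a Gaussian prime, the nonzero zero-divisors of `ℤ[i]/(q^m)` are exactly the nonzero
multiples of `q`. For `m ≤ 1` there are none. For `m = 2` any two of them multiply to zero,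
so `Γ` is complete on `q² - 1 ≥ 8` vertices. For `m ≥ 3` there is no Hamiltonian cycle: sending
each vertex to its successor on such a cycle would map the vertices `q + s`,
`s ∈ J = (q^(m-1))`, injectively to neighbours, but every neighbour of `q + s` lies in `J \ {0}`,
a smaller set.
-/

open SimpleGraph

namespace SimpleGraph

variable {V : Type*} {G : SimpleGraph V}

theorem pancyclic_of_forall_adj (hG : ∀ x y : V, x ≠ y → G.Adj x y) (hV : 3 ≤ Nat.card V) :
    Pancyclic G := by
  have : Finite V := Nat.finite_of_card_ne_zero (by omega)
  refine ⟨hV, fun k hk hkV => (cycleGraph_isContained_iff hk).1 ?_⟩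
  let e : Fin k ↪ V := (Fin.castLEEmb hkV).trans (Finite.equivFin V).symm.toEmbedding
  exact ⟨⟨⟨e, fun h => hG _ _ (e.injective.ne h.ne)⟩, e.injective⟩⟩

theorem exists_injective_adj_of_hasCycleLength_card (h : HasCycleLength G (Nat.card V)) :
    ∃ f : V → V, Function.Injective f ∧ ∀ v, G.Adj v (f v) := by
  obtain ⟨n, hn⟩ : ∃ n, Nat.card V = n + 3 := by
    obtain ⟨_, p, hp, hl⟩ := h
    exact ⟨p.length - 3, by have := hp.three_le_length; omega⟩
  have : Finite V := Nat.finite_of_card_ne_zero (by omega)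
  obtain ⟨c⟩ := (cycleGraph_isContained_iff (show 2 < n + 3 by omega)).2 (hn ▸ h)
  let e := Equiv.ofBijective c (c.injective.bijective_of_nat_card_le (by simp [hn]))
  refine ⟨fun v => c (e.symm v + 1),
    c.injective.comp ((add_left_injective 1).comp e.symm.injective), fun v => ?_⟩
  conv_lhs => rw [← e.apply_symm_apply v]
  exact c.toHom.map_adj (cycleGraph_adj.2 (Or.inr (by simp)))

end SimpleGraph

section PrimePowerQuotient

variable {A : Type*} [CommRing A] {p : A} {m k : ℕ}

theorem Ideal.Quotient.mk_pow_dvd_mk_iff_of_le (hkm : k ≤ m) {z : A} :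
    Ideal.Quotient.mk (Ideal.span {p ^ m}) (p ^ k) ∣ Ideal.Quotient.mk _ z ↔ p ^ k ∣ z := by
  refine ⟨fun ⟨c, hc⟩ => ?_, map_dvd _⟩
  obtain ⟨w, rfl⟩ := Ideal.Quotient.mk_surjective c
  rw [← map_mul, Ideal.Quotient.eq, Ideal.mem_span_singleton] at hc
  simpa using dvd_add ((pow_dvd_pow p hkm).trans hc) (dvd_mul_right (p ^ k) w)

variable [IsDomain A]

theorem zdVertex_quotient_span_pow (hp : Prime p) :
    zdVertex (A ⧸ Ideal.span {p ^ m}) = {x | Ideal.Quotient.mk _ p ∣ x} \ {0} := by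
  ext x
  obtain ⟨z, rfl⟩ := Ideal.Quotient.mk_surjective x
  simp only [zdVertex, Set.mem_sdiff, Set.mem_ofPred_eq, Set.mem_singleton_iff]
  constructor
  · rintro ⟨hz, y, hy, hzy⟩
    obtain ⟨w, rfl⟩ := Ideal.Quotient.mk_surjective y
    rw [← map_mul, Ideal.Quotient.eq_zero_iff_dvd] at hzy
    rw [Ne, Ideal.Quotient.eq_zero_iff_dvd] at hy
    refine ⟨map_dvd _ (not_not.1 fun hpz => hy (hp.pow_dvd_of_dvd_mul_left m hpz hzy)), hz⟩
  · rintro ⟨⟨c, hc⟩, hz⟩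
    cases m with
    | zero => simp [Ideal.Quotient.eq_zero_iff_dvd] at hz
    | succ k =>
      refine ⟨hz, Ideal.Quotient.mk _ (p ^ k), ?_, ?_⟩
      · rw [Ne, Ideal.Quotient.eq_zero_iff_dvd, pow_dvd_pow_iff hp.ne_zero hp.not_isUnit]
        omega
      · rw [hc, mul_right_comm, ← map_mul, ← pow_succ',
          (Ideal.Quotient.eq_zero_iff_dvd _ _).2 dvd_rfl, zero_mul]

theorem zdVertex_quotient_span_pow_eq_empty (hp : Prime p) (hm : m ≤ 1) :
    zdVertex (A ⧸ Ideal.span {p ^ m}) = ∅ := by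
  have hp0 : Ideal.Quotient.mk (Ideal.span {p ^ m}) p = 0 :=
    (Ideal.Quotient.eq_zero_iff_dvd _ _).2 ((pow_dvd_pow p hm).trans (pow_one p).dvd)
  rw [zdVertex_quotient_span_pow hp, hp0, Set.sdiff_eq_empty]
  exact fun x hx => zero_dvd_iff.1 hx

theorem zdGraph_adj_quotient_span_sq (hp : Prime p) {x y : zdVertex (A ⧸ Ideal.span {p ^ 2})}
    (hxy : x ≠ y) : (zdGraph _).Adj x y := by
  have hx : x.1 ∈ {z | Ideal.Quotient.mk _ p ∣ z} \ {0} := zdVertex_quotient_span_pow hp ▸ x.2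
  have hy : y.1 ∈ {z | Ideal.Quotient.mk _ p ∣ z} \ {0} := zdVertex_quotient_span_pow hp ▸ y.2
  obtain ⟨⟨a, ha⟩, -⟩ := hx
  obtain ⟨⟨b, hb⟩, -⟩ := hy
  refine ⟨hxy, ?_⟩
  rw [ha, hb, mul_mul_mul_comm, ← map_mul, ← sq, (Ideal.Quotient.eq_zero_iff_dvd _ _).2 dvd_rfl,
    zero_mul]

theorem mk_pow_pred_dvd_of_mul_eq_zero (hp : Prime p) (hm : 3 ≤ m)
    {s y : A ⧸ Ideal.span {p ^ m}} (hs : Ideal.Quotient.mk _ (p ^ (m - 1)) ∣ s)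
    (h : (Ideal.Quotient.mk _ p + s) * y = 0) :
    Ideal.Quotient.mk _ (p ^ (m - 1)) ∣ y := by
  obtain ⟨c, rfl⟩ := hs
  obtain ⟨t, rfl⟩ := Ideal.Quotient.mk_surjective c
  obtain ⟨w, rfl⟩ := Ideal.Quotient.mk_surjective y
  rw [Ideal.Quotient.mk_pow_dvd_mk_iff_of_le (Nat.sub_le m 1)]
  have hu : ¬ p ∣ 1 + p ^ (m - 2) * t := fun hdvd =>
    hp.not_isUnit (isUnit_of_dvd_one ((dvd_add_left (dvd_mul_of_dvd_left
      (dvd_pow_self p (by omega)) t)).1 hdvd))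
  refine hp.pow_dvd_of_dvd_mul_left _ hu ((mul_dvd_mul_iff_left hp.ne_zero).1 ?_)
  rw [← pow_succ', Nat.sub_add_cancel (by omega), ← Ideal.Quotient.eq_zero_iff_dvd]
  convert h using 1
  simp only [← map_mul, ← map_add]
  congr 1
  rw [show m - 1 = m - 2 + 1 by omega]
  ring

theorem not_hasCycleLength_card_zdGraph_quotient_span_pow (hp : Prime p) (hm : 3 ≤ m) :
    ¬ HasCycleLength (zdGraph (A ⧸ Ideal.span {p ^ m}))
      (Nat.card (zdVertex (A ⧸ Ideal.span {p ^ m}))) := by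
  intro h
  obtain ⟨f, hf, hadj⟩ := exists_injective_adj_of_hasCycleLength_card h
  have : Finite (zdVertex (A ⧸ Ideal.span {p ^ m})) := by
    obtain ⟨_, c, hc, hl⟩ := h
    exact Nat.finite_of_card_ne_zero (by have := hc.three_le_length; omega)
  let J := {y : A ⧸ Ideal.span {p ^ m} | Ideal.Quotient.mk _ (p ^ (m - 1)) ∣ y}
  have hvertex (s : J) : Ideal.Quotient.mk _ p + s.1 ∈ zdVertex (A ⧸ Ideal.span {p ^ m}) := by
    rw [zdVertex_quotient_span_pow hp]
    refine ⟨dvd_add dvd_rfl ((map_dvd _ (dvd_pow_self p (by omega))).trans s.2), fun h0 => ?_⟩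
    have h1 := mk_pow_pred_dvd_of_mul_eq_zero hp hm s.2 (y := 1)
      (by rw [Set.mem_singleton_iff.1 h0, zero_mul])
    rw [← map_one (Ideal.Quotient.mk _),
      Ideal.Quotient.mk_pow_dvd_mk_iff_of_le (Nat.sub_le m 1)] at h1
    exact hp.not_isUnit ((isUnit_pow_iff (by omega)).1 (isUnit_of_dvd_one h1))
  let v (s : J) : zdVertex (A ⧸ Ideal.span {p ^ m}) := ⟨_, hvertex s⟩
  have hv : Function.Injective v := fun s t hst =>
    Subtype.ext (add_left_cancel (congrArg Subtype.val hst))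
  have : Finite J := Finite.of_injective v hv
  let φ (s : J) : J := ⟨f (v s), mk_pow_pred_dvd_of_mul_eq_zero hp hm s.2 (hadj (v s)).2⟩
  have hφ : Function.Injective φ := fun s t hst =>
    hv (hf (Subtype.ext (congrArg (fun x : J => x.1) hst)))
  obtain ⟨s, hs⟩ := Finite.injective_iff_surjective.1 hφ ⟨0, dvd_zero _⟩
  exact (f (v s)).2.1 (congrArg Subtype.val hs)

end PrimePowerQuotient

theorem GaussianInt.card_setOf_mk_dvd {a : GaussianInt} (ha : a ≠ 0) (d : ℕ) [NeZero d] :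
    Nat.card {r : GaussianInt ⧸ Ideal.span {a * d} | Ideal.Quotient.mk _ a ∣ r} = d ^ 2 := by
  have key (z w : GaussianInt) : Ideal.Quotient.mk (Ideal.span {a * d}) (a * z) =
      Ideal.Quotient.mk _ (a * w) ↔ (w.re : ZMod d) = z.re ∧ (w.im : ZMod d) = z.im := by
    rw [Ideal.Quotient.eq, Ideal.mem_span_singleton, ← mul_sub, mul_dvd_mul_iff_left ha,
      ← Int.cast_natCast, Zsqrtd.intCast_dvd, ZMod.intCast_eq_intCast_iff_dvd_sub,
      ZMod.intCast_eq_intCast_iff_dvd_sub, Zsqrtd.re_sub, Zsqrtd.im_sub]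
  let F (x : ZMod d × ZMod d) :
      {r : GaussianInt ⧸ Ideal.span {a * d} | Ideal.Quotient.mk _ a ∣ r} :=
    ⟨Ideal.Quotient.mk _ (a * ⟨(x.1.cast : ℤ), (x.2.cast : ℤ)⟩),
      map_dvd _ (dvd_mul_right a _)⟩
  have hF : Function.Bijective F := by
    constructor
    · intro x y hxy
      obtain ⟨h1, h2⟩ := (key _ _).1 (congrArg Subtype.val hxy)
      simp only [ZMod.intCast_zmod_cast] at h1 h2
      exact Prod.ext h1.symm h2.symm
    · rintro ⟨r, c, rfl⟩
      obtain ⟨w, rfl⟩ := Ideal.Quotient.mk_surjective c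
      exact ⟨(w.re, w.im), Subtype.ext (by simp [F, ← map_mul, key])⟩
  rw [← Nat.card_eq_of_bijective F hF, Nat.card_prod, Nat.card_zmod, sq]

theorem stmt3_general (q m : ℕ) (hq : q.Prime) (h3 : q % 4 = 3) :
    Pancyclic (zdGraph (Zi (q ^ m))) ↔ m = 2 := by
  have hp : Prime (q : GaussianInt) :=
    have := Fact.mk hq
    (GaussianInt.prime_iff_mod_four_eq_three_of_nat_prime q).2 h3
  dsimp only [Zi]
  rw [Nat.cast_pow]
  refine ⟨fun h => ?_, ?_⟩
  · rcases (by omega : m ≤ 1 ∨ m = 2 ∨ 3 ≤ m) with hm | hm | hm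
    · have hV := h.1
      simp [zdVertex_quotient_span_pow_eq_empty hp hm] at hV
    · exact hm
    · exact absurd (h.2 _ h.1 le_rfl)
        (not_hasCycleLength_card_zdGraph_quotient_span_pow hp hm)
  · rintro rfl
    refine pancyclic_of_forall_adj (fun _ _ => zdGraph_adj_quotient_span_sq hp) ?_
    have : NeZero q := ⟨hq.ne_zero⟩
    rw [zdVertex_quotient_span_pow hp, Nat.card_coe_set_eq,
      Set.ncard_sdiff_singleton_of_mem (a := 0) (dvd_zero _), ← Nat.card_coe_set_eq, sq,
      GaussianInt.card_setOf_mk_dvd hp.ne_zero q]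
    have : 3 * 3 ≤ q ^ 2 := sq q ▸ Nat.mul_le_mul (by omega) (by omega)
    omega

theorem stmt3 (q m : ℕ) (hq : q.Prime) (h3 : q % 4 = 3) (hm : 1 ≤ m) :
    Pancyclic (zdGraph (Zi (q ^ m))) ↔ m = 2 :=
  stmt3_general q m hq h3
end

section
/- If q is a prime with q ≡ 3 (mod 4), then Γ(ℤ_{q^2}[i]) is the complete graph on q^2 − 1 vertices. -/
open SimpleGraph

/-!
Since `q ≡ 3 (mod 4)`, `q` stays prime in `ℤ[i]`, so `ℤ_{q²}[i] = R ⧸ (p²)` for a prime `p` of a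
domain `R`. There the nonzero zero-divisors are exactly the classes of `p * a` with `p ∤ a`, and
any two of them multiply into `(p²)`, so `Γ` is complete. Multiplication by `p` embeds `R ⧸ (p)`
into `R ⧸ (p²)` with image the zero-divisors together with `0`, giving `|R ⧸ (p)| - 1` vertices;
and `ℤ[i] ⧸ (q) ≅ (ℤ/q)²` additively, via real and imaginary parts.
-/

theorem zdGraph_eq_top_of_mul_eq_zero {R : Type*} [CommRing R]
    (h : ∀ x ∈ zdVertex R, ∀ y ∈ zdVertex R, x * y = 0) : zdGraph R = ⊤ := by
  ext x y
  exact ⟨And.left, fun hxy => ⟨hxy, h x x.2 y y.2⟩⟩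

theorem Nat.card_setOf_ne {α : Type*} [Finite α] (a : α) :
    Nat.card {x : α | x ≠ a} = Nat.card α - 1 := by
  rw [← Set.compl_singleton_eq, Nat.card_coe_set_eq, Set.ncard_compl, Set.ncard_singleton]

theorem sq_dvd_mul_left_iff {M : Type*} [CommMonoidWithZero M] [IsCancelMulZero M] {p : M}
    (hp : p ≠ 0) (a : M) :
    p ^ 2 ∣ p * a ↔ p ∣ a := by
  rw [sq, mul_dvd_mul_iff_left hp]

namespace Ideal

section

variable {R : Type*} [CommRing R]

noncomputable def mulQuotSpanSq (p : R) : (R ⧸ span {p}) →ₗ[R] R ⧸ span {p ^ 2} :=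
  (span {p}).liftQ ((span {p ^ 2}).mkQ ∘ₗ LinearMap.mulLeft R p) <|
    (span_singleton_le_iff_mem _).2 <|
      (Submodule.Quotient.mk_eq_zero _).2 (mem_span_singleton.2 (dvd_of_eq (sq p)))

theorem mulQuotSpanSq_mk (p a : R) :
    mulQuotSpanSq p (Quotient.mk _ a) = Quotient.mk _ (p * a) := rfl

end

variable {R : Type*} [CommRing R] [IsDomain R] {p : R}

theorem mk_mem_zdVertex_quotient_span_sq_iff (hp : Prime p) (x : R) :
    Quotient.mk (span {p ^ 2}) x ∈ zdVertex (R ⧸ span {p ^ 2}) ↔ p ∣ x ∧ ¬ p ^ 2 ∣ x := by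
  simp only [zdVertex, Set.mem_ofPred_eq, ne_eq, Quotient.eq_zero_iff_dvd]
  constructor
  · rintro ⟨hx, y, hy, hxy⟩
    obtain ⟨y, rfl⟩ := Quotient.mk_surjective y
    rw [← map_mul, Quotient.eq_zero_iff_dvd] at hxy
    rw [Quotient.eq_zero_iff_dvd] at hy
    exact ⟨by_contra fun hpx => hy (hp.pow_dvd_of_dvd_mul_left 2 hpx hxy), hx⟩
  · rintro ⟨hpx, hx⟩
    refine ⟨hx, Quotient.mk _ p, ?_, ?_⟩
    · rw [Quotient.eq_zero_iff_dvd]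
      intro h
      refine hp.not_isUnit (isUnit_of_dvd_one ((sq_dvd_mul_left_iff hp.ne_zero 1).1 ?_))
      rwa [mul_one]
    · rw [← map_mul, Quotient.eq_zero_iff_dvd, mul_comm, sq_dvd_mul_left_iff hp.ne_zero]
      exact hpx

theorem mul_eq_zero_of_mem_zdVertex_quotient_span_sq (hp : Prime p)
    {x y : R ⧸ span {p ^ 2}} (hx : x ∈ zdVertex _) (hy : y ∈ zdVertex _) : x * y = 0 := by
  obtain ⟨x, rfl⟩ := Quotient.mk_surjective x
  obtain ⟨y, rfl⟩ := Quotient.mk_surjective y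
  rw [← map_mul, Quotient.eq_zero_iff_dvd, sq]
  exact mul_dvd_mul ((mk_mem_zdVertex_quotient_span_sq_iff hp x).1 hx).1
    ((mk_mem_zdVertex_quotient_span_sq_iff hp y).1 hy).1

theorem zdGraph_quotient_span_sq_eq_top (hp : Prime p) : zdGraph (R ⧸ span {p ^ 2}) = ⊤ :=
  zdGraph_eq_top_of_mul_eq_zero fun _ hx _ hy =>
    mul_eq_zero_of_mem_zdVertex_quotient_span_sq hp hx hy

theorem mulQuotSpanSq_injective (hp : p ≠ 0) : Function.Injective (mulQuotSpanSq p) := by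
  intro a b hab
  obtain ⟨a, rfl⟩ := Quotient.mk_surjective a
  obtain ⟨b, rfl⟩ := Quotient.mk_surjective b
  rw [mulQuotSpanSq_mk, mulQuotSpanSq_mk, Quotient.eq, mem_span_singleton, ← mul_sub,
    sq_dvd_mul_left_iff hp] at hab
  rwa [Quotient.eq, mem_span_singleton]

theorem image_mulQuotSpanSq (hp : Prime p) :
    mulQuotSpanSq p '' {a | a ≠ 0} = zdVertex (R ⧸ span {p ^ 2}) := by
  ext x
  constructor
  · rintro ⟨a, ha, rfl⟩
    obtain ⟨a, rfl⟩ := Quotient.mk_surjective a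
    rw [mulQuotSpanSq_mk, mk_mem_zdVertex_quotient_span_sq_iff hp, sq_dvd_mul_left_iff hp.ne_zero]
    exact ⟨dvd_mul_right p a, (Quotient.eq_zero_iff_dvd p a).not.1 ha⟩
  · intro hx
    obtain ⟨x, rfl⟩ := Quotient.mk_surjective x
    obtain ⟨⟨a, rfl⟩, hx⟩ := (mk_mem_zdVertex_quotient_span_sq_iff hp _).1 hx
    rw [sq_dvd_mul_left_iff hp.ne_zero, ← Quotient.eq_zero_iff_dvd] at hx
    exact ⟨Quotient.mk _ a, hx, mulQuotSpanSq_mk p a⟩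

theorem card_zdVertex_quotient_span_sq (hp : Prime p) [Finite (R ⧸ span {p})] :
    Nat.card (zdVertex (R ⧸ span {p ^ 2})) = Nat.card (R ⧸ span {p}) - 1 := by
  rw [← image_mulQuotSpanSq hp, Nat.card_image_of_injective (mulQuotSpanSq_injective hp.ne_zero),
    Nat.card_setOf_ne]

end Ideal

namespace GaussianInt

def reImModAddHom (n : ℕ) : GaussianInt →+ ZMod n × ZMod n where
  toFun z := (z.re, z.im)
  map_zero' := by simp
  map_add' z w := by simp

theorem reImModAddHom_surjective (n : ℕ) : Function.Surjective (reImModAddHom n) :=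
  fun x => ⟨⟨x.1.cast, x.2.cast⟩, by simp [reImModAddHom]⟩

theorem ker_reImModAddHom (n : ℕ) :
    (reImModAddHom n).ker = (Ideal.span {(n : GaussianInt)}).toAddSubgroup := by
  ext z
  rw [AddMonoidHom.mem_ker, Submodule.mem_toAddSubgroup, Ideal.mem_span_singleton,
    ← Int.cast_natCast, Zsqrtd.intCast_dvd]
  simp [reImModAddHom, ZMod.intCast_zmod_eq_zero_iff_dvd]

end GaussianInt

theorem stmt4 (q : ℕ) (hq : q.Prime) (h3 : q % 4 = 3) :
    zdGraph (Zi (q ^ 2)) = ⊤ ∧ Nat.card (zdVertex (Zi (q ^ 2))) = q ^ 2 - 1 := by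
  have : Fact q.Prime := ⟨hq⟩
  have hprime : Prime (q : GaussianInt) :=
    (GaussianInt.prime_iff_mod_four_eq_three_of_nat_prime q).2 h3
  have hcard := GaussianInt.card_quotient_span_natCast q
  have : Finite (Zi q) :=
    Nat.finite_of_card_ne_zero (by rw [hcard]; exact pow_ne_zero 2 hq.ne_zero)
  unfold Zi
  rw [Nat.cast_pow]
  exact ⟨Ideal.zdGraph_quotient_span_sq_eq_top hprime,
    by rw [Ideal.card_zdVertex_quotient_span_sq hprime, hcard]⟩
end

section
/- Let p be a prime with p ≡ 1 (mod 4) and m ≥ 1. The zero-divisor graph Γ(ℤ_{p^m}[i]) is bipancyclic if and only if m = 1. -/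
open SimpleGraph

/-!
Since `p ≡ 1 (mod 4)`, `-1` is a square `x²` modulo `p`, and `c = x ^ p ^ (m - 1)` satisfies
`c² ≡ -1 (mod p ^ m)`. Then `a + b i ↦ (a + b c, a - b c)` identifies `ℤ_{p^m}[i]` with
`ℤ_{p^m} × ℤ_{p^m}`, because `2` and `c` are units.

For `m = 1` the zero-divisor graph of `𝔽_p × 𝔽_p` is the complete bipartite graph
`K_{p-1,p-1}`, which contains cycles of every even length up to its order.

For `m ≥ 2`, let `A` be the vertices `(u, y)` with `u` a unit and `y` a non-unit, and `N` the
vertices with first coordinate `0`. Every neighbour of a vertex of `A` lies in `N`, and along a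
cycle distinct vertices of `A` have distinct successors, so a cycle misses at least
`|A| - |N| ≥ φ(p^m) p^(m-1) - (p^m - 1) ≥ 2` vertices. Hence there is no cycle of length
`2 ⌊|Γ| / 2⌋`.
-/

theorem List.Nodup.length_le_card_of_forall_mem {α : Type*} [DecidableEq α] {l : List α}
    {s : Finset α} (hl : l.Nodup) (hs : ∀ x ∈ l, x ∈ s) : l.length ≤ s.card := by
  rw [← List.toFinset_card_of_nodup hl]
  exact Finset.card_le_card fun x hx => hs x (List.mem_toFinset.mp hx)

namespace SimpleGraph

variable {V W : Type*} {G : SimpleGraph V} {H : SimpleGraph W}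

theorem Walk.IsCycle.length_add_card_le [Fintype V] [DecidableEq V] {A N : Finset V}
    (hAN : ∀ a ∈ A, ∀ w, G.Adj a w → w ∈ N) {u : V} {c : G.Walk u u} (hc : c.IsCycle) :
    c.length + A.card ≤ Fintype.card V + N.card := by
  set inA : G.Dart → Bool := fun d => d.fst ∈ A
  have hsplit := c.darts.length_eq_length_filter_add inA
  have hfromA : ((c.darts.filter inA).map (·.snd)).length ≤ N.card := by
    refine List.Nodup.length_le_card_of_forall_mem ?_ ?_
    · refine (List.filter_sublist.map _).nodup ?_
      rw [Walk.map_snd_darts]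
      exact hc.support_nodup
    · simp only [List.mem_map, List.mem_filter]
      rintro _ ⟨d, ⟨-, hd⟩, rfl⟩
      exact hAN _ (by simpa [inA] using hd) _ d.adj
  have hnotA : ((c.darts.filter (!inA ·)).map (·.fst)).length ≤ Aᶜ.card := by
    refine List.Nodup.length_le_card_of_forall_mem ?_ ?_
    · refine (List.filter_sublist.map _).nodup ?_
      rw [Walk.map_fst_darts]
      exact hc.nodup_dropLast_support
    · simp only [List.mem_map, List.mem_filter]
      rintro _ ⟨d, ⟨-, hd⟩, rfl⟩
      simpa [inA] using hd
  rw [List.length_map] at hfromA hnotA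
  rw [Finset.card_compl] at hnotA
  have := A.card_le_univ
  rw [← c.length_darts]
  omega

theorem hasCycleLength_iff_cycleGraph_isContained {n : ℕ} (hn : 3 ≤ n) :
    HasCycleLength G n ↔ cycleGraph n ⊑ G :=
  (cycleGraph_isContained_iff hn).symm

theorem Iso.bipancyclic_iff (e : G ≃g H) : Bipancyclic G ↔ Bipancyclic H := by
  have hcycle (k : ℕ) (hk : 4 ≤ k) : HasCycleLength G k ↔ HasCycleLength H k := by
    rw [hasCycleLength_iff_cycleGraph_isContained (by omega),
      hasCycleLength_iff_cycleGraph_isContained (by omega), isContained_congr_right e]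
  unfold Bipancyclic
  rw [Nat.card_congr e.toEquiv]
  exact and_congr_right fun _ => forall_congr' fun k => imp_congr_right fun _ =>
    forall_congr' fun hk => imp_congr_right fun _ => hcycle k hk

theorem cycleGraph_isContained_completeBipartiteGraph {α β : Type*} {k : ℕ}
    (f : Fin k ↪ α) (g : Fin k ↪ β) : cycleGraph (2 * k) ⊑ completeBipartiteGraph α β := by
  let φ : Fin (2 * k) → α ⊕ β := fun i =>
    if i.val % 2 = 0 then .inl (f ⟨i / 2, by omega⟩) else .inr (g ⟨i / 2, by omega⟩)
  have hadj {i j : Fin (2 * k)} (h : i.val % 2 ≠ j.val % 2) :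
      (completeBipartiteGraph α β).Adj (φ i) (φ j) := by
    simp only [φ]
    split_ifs <;> first | omega | simp [completeBipartiteGraph]
  have hsub (i j : Fin (2 * k)) : (i - j).val % 2 = (2 * k - j + i) % 2 := by
    rw [Fin.val_sub, Nat.mod_mod_of_dvd _ (dvd_mul_right 2 k)]
  refine ⟨⟨⟨φ, fun {i j} hij => hadj ?_⟩, fun i j hij => ?_⟩⟩
  · rcases cycleGraph_adj'.mp hij with h | h
    · have := hsub i j; omega
    · have := hsub j i; omega
  · change φ i = φ j at hij
    simp only [φ] at hij
    split_ifs at hij <;> simp only [Sum.inl.injEq, Sum.inr.injEq,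
      f.injective.eq_iff, g.injective.eq_iff, Fin.mk.injEq] at hij <;> omega

theorem bipancyclic_completeBipartiteGraph {α β : Type*} [Finite α] [Finite β]
    (hαβ : Nat.card α = Nat.card β) (h2 : 2 ≤ Nat.card α) :
    Bipancyclic (completeBipartiteGraph α β) := by
  rw [Bipancyclic, Nat.card_sum, ← hαβ]
  refine ⟨by omega, fun k hk h4 hk' => ?_⟩
  obtain ⟨j, rfl⟩ := hk.two_dvd
  rw [hasCycleLength_iff_cycleGraph_isContained (by omega)]
  exact cycleGraph_isContained_completeBipartiteGraph
    ((Fin.castLEEmb (by omega)).trans (Finite.equivFin α).symm.toEmbedding)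
    ((Fin.castLEEmb (by omega)).trans (Finite.equivFin β).symm.toEmbedding)

end SimpleGraph

section ZeroDivisorGraph

variable {R S : Type*} [CommRing R] [CommRing S]

theorem RingEquiv.map_mem_zdVertex (e : R ≃+* S) {x : R} (hx : x ∈ zdVertex R) :
    e x ∈ zdVertex S := by
  obtain ⟨hx0, y, hy0, hxy⟩ := hx
  exact ⟨by simpa using hx0, e y, by simpa using hy0, by rw [← map_mul, hxy, map_zero]⟩

def RingEquiv.zdGraphIso (e : R ≃+* S) : zdGraph R ≃g zdGraph S where
  toEquiv := e.toEquiv.subtypeEquiv fun x =>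
    ⟨e.map_mem_zdVertex, fun h => by simpa using e.symm.map_mem_zdVertex h⟩
  map_rel_iff' {x y} := by
    simp [zdGraph, Subtype.ext_iff, ← map_mul]

theorem mem_zdVertex_prod_field_iff {F : Type*} [Field F] {x : F × F} :
    x ∈ zdVertex (F × F) ↔ (x.1 = 0 ↔ x.2 ≠ 0) := by
  constructor
  · rintro ⟨hx0, y, hy0, hxy⟩
    simp only [ne_eq, Prod.ext_iff, Prod.fst_mul, Prod.snd_mul, Prod.fst_zero, Prod.snd_zero,
      mul_eq_zero] at hx0 hy0 hxy
    tauto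
  · intro h
    by_cases h1 : x.1 = 0
    · exact ⟨fun h0 => h.mp h1 (congrArg Prod.snd h0), (1, 0), by simp, by simp [Prod.ext_iff, h1]⟩
    · have h2 : x.2 = 0 := not_not.mp (mt h.mpr h1)
      exact ⟨fun h0 => h1 (congrArg Prod.fst h0), (0, 1), by simp, by simp [Prod.ext_iff, h2]⟩

def unitsSumToZdVertexProd (F : Type*) [Field F] : Fˣ ⊕ Fˣ → zdVertex (F × F) :=
  Sum.elim (fun u => ⟨((u : F), 0), mem_zdVertex_prod_field_iff.mpr (by simp)⟩)
    (fun u => ⟨(0, (u : F)), mem_zdVertex_prod_field_iff.mpr (by simp)⟩)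

theorem unitsSumToZdVertexProd_bijective (F : Type*) [Field F] :
    (unitsSumToZdVertexProd F).Bijective := by
  refine ⟨?_, fun ⟨x, hx⟩ => ?_⟩
  · rintro (a | a) (b | b) h <;> simp_all [unitsSumToZdVertexProd, Subtype.ext_iff, Units.val_inj]
  · have hx' := mem_zdVertex_prod_field_iff.mp hx
    by_cases h1 : x.1 = 0
    · exact ⟨.inr (Units.mk0 _ (hx'.mp h1)), Subtype.ext (Prod.ext h1.symm rfl)⟩
    · have h2 : x.2 = 0 := not_not.mp (mt hx'.mpr h1)
      exact ⟨.inl (Units.mk0 _ h1), Subtype.ext (Prod.ext rfl h2.symm)⟩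

noncomputable def completeBipartiteGraphIsoZdGraphProd (F : Type*) [Field F] :
    completeBipartiteGraph Fˣ Fˣ ≃g zdGraph (F × F) where
  toEquiv := .ofBijective _ (unitsSumToZdVertexProd_bijective F)
  map_rel_iff' {x y} := by
    cases x <;> cases y <;> simp [zdGraph, completeBipartiteGraph, unitsSumToZdVertexProd]

theorem Nat.card_units_add_card_nonunits [Finite R] :
    Nat.card Rˣ + Nat.card (nonunits R) = Nat.card R := by
  rw [← Nat.card_range_of_injective Units.val_injective,
    ← Set.ncard_add_ncard_compl (Set.range (Units.val : Rˣ → R))]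
  rfl

theorem exists_ne_zero_mul_eq_zero_of_mem_nonunits [Finite R] {y : R} (hy : y ∈ nonunits R) :
    ∃ z ≠ 0, y * z = 0 := by
  by_contra! h
  exact hy (isUnit_iff_mem_nonZeroDivisors_of_finite.mpr
    (mem_nonZeroDivisors_iff_left.mpr fun z hz => by_contra fun hz0 => h z hz0 hz))

theorem unit_nonunit_mem_zdVertex_prod [Finite R] [Nontrivial R] (u : Rˣ) {y : R}
    (hy : y ∈ nonunits R) : ((u : R), y) ∈ zdVertex (R × R) := by
  obtain ⟨z, hz0, hyz⟩ := exists_ne_zero_mul_eq_zero_of_mem_nonunits hy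
  exact ⟨fun h => u.ne_zero (congrArg Prod.fst h), (0, z), fun h => hz0 (congrArg Prod.snd h),
    Prod.ext (mul_zero _) hyz⟩

theorem not_bipancyclic_zdGraph_prod [Finite R] [Nontrivial R]
    (hR : Nat.card R < Nat.card Rˣ * Nat.card (nonunits R)) :
    ¬Bipancyclic (zdGraph (R × R)) := by
  classical
  have := Fintype.ofFinite R
  have := Fintype.ofFinite (zdVertex (R × R))
  let A : Finset (zdVertex (R × R)) := Finset.univ.map
    ⟨fun x : Rˣ × nonunits R => ⟨((x.1 : R), x.2), unit_nonunit_mem_zdVertex_prod x.1 x.2.2⟩,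
      fun x y h => by simpa [Prod.ext_iff, Units.ext_iff, Subtype.ext_iff] using h⟩
  let N : Finset (zdVertex (R × R)) := Finset.univ.filter fun v => (v : R × R).1 = 0
  have hAN : ∀ a ∈ A, ∀ w, (zdGraph (R × R)).Adj a w → w ∈ N := by
    simp only [A, N, Finset.mem_map, Finset.mem_filter]
    rintro _ ⟨⟨u, y⟩, -, rfl⟩ w ⟨-, huw⟩
    exact ⟨Finset.mem_univ _, (u.isUnit.mul_right_eq_zero).mp (congrArg Prod.fst huw)⟩
  have hA : A.card = Nat.card Rˣ * Nat.card (nonunits R) := by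
    simp [A, Nat.card_eq_fintype_card]
  have hN : N.card < Nat.card R := by
    have hinj : N.card ≤ (Finset.univ.erase (0 : R)).card := by
      refine Finset.card_le_card_of_injOn (fun v => (v : R × R).2) (fun v hv => ?_)
        (fun v hv w hw h => ?_)
      · simp only [N, Finset.mem_coe, Finset.mem_filter, Finset.mem_univ, true_and] at hv
        simpa using fun h => v.2.1 (Prod.ext hv h)
      · simp only [N, Finset.mem_coe, Finset.mem_filter, Finset.mem_univ, true_and] at hv hw
        exact Subtype.ext (Prod.ext (hv.trans hw.symm) h)
    rw [Finset.card_erase_of_mem (Finset.mem_univ _), Finset.card_univ,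
      ← Nat.card_eq_fintype_card] at hinj
    have := Nat.card_pos (α := R)
    omega
  rintro ⟨h4, hcycle⟩
  set n := Nat.card (zdVertex (R × R))
  obtain ⟨_, c, hc, hlen⟩ := hcycle (2 * (n / 2)) (even_two_mul _) (by omega) (by omega)
  have := hc.length_add_card_le hAN
  rw [← Nat.card_eq_fintype_card] at this
  omega

end ZeroDivisorGraph

theorem ZMod.card_lt_card_units_mul_card_nonunits {p m : ℕ} (hp : p.Prime) (hp3 : 3 ≤ p)
    (hm : 2 ≤ m) :
    Nat.card (ZMod (p ^ m)) < Nat.card (ZMod (p ^ m))ˣ * Nat.card (nonunits (ZMod (p ^ m))) := by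
  have : NeZero (p ^ m) := ⟨pow_ne_zero _ hp.ne_zero⟩
  have hsplit := Nat.card_units_add_card_nonunits (R := ZMod (p ^ m))
  rw [Nat.card_eq_fintype_card (α := (ZMod _)ˣ), ZMod.card_units_eq_totient,
    Nat.totient_prime_pow hp (by omega), Nat.card_zmod] at hsplit ⊢
  generalize Nat.card (nonunits (ZMod (p ^ m))) = n at hsplit ⊢
  obtain ⟨q, rfl⟩ : ∃ q, p = q + 1 := ⟨p - 1, by omega⟩
  have hpow : (q + 1) ^ m = (q + 1) ^ (m - 1) * (q + 1) := by rw [← pow_succ]; congr 1; omega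
  have hp_le : q + 1 ≤ (q + 1) ^ (m - 1) := Nat.le_self_pow (by omega) _
  rw [hpow, Nat.add_sub_cancel] at hsplit ⊢
  generalize (q + 1) ^ (m - 1) = s at hsplit hp_le ⊢
  obtain rfl : n = s := by linarith
  calc n * (q + 1) < n * (q + 1) * q :=
        lt_mul_of_one_lt_right (Nat.mul_pos (by omega) (by omega)) (by omega)
    _ = n * q * (q + 1) := by ring
    _ ≤ n * q * n := Nat.mul_le_mul_left _ hp_le

theorem ZMod.isSquare_neg_one_prime_pow {p : ℕ} [Fact p.Prime] (hp : p % 4 = 1) (m : ℕ) :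
    IsSquare (-1 : ZMod (p ^ m)) := by
  obtain ⟨x, hx⟩ := ZMod.exists_sq_eq_neg_one_iff.mpr (by omega : p % 4 ≠ 3)
  cases m with
  | zero => rw [pow_zero]; exact ⟨0, Subsingleton.elim _ _⟩
  | succ k =>
    have hx' : (p : ℤ) ∣ (x.val : ℤ) ^ 2 - (-1) := by
      rw [← ZMod.intCast_zmod_eq_zero_iff_dvd]
      push_cast
      rw [ZMod.natCast_val, ZMod.cast_id, hx]
      ring
    have hlift := dvd_sub_pow_of_dvd_sub hx' k
    have hodd : Odd (p ^ k) := (Nat.odd_iff.mpr (by omega)).pow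
    rw [← pow_mul, mul_comm, pow_mul, hodd.neg_one_pow, ← Nat.cast_pow,
      ← ZMod.intCast_zmod_eq_zero_iff_dvd] at hlift
    refine ⟨((x.val : ℤ) ^ p ^ k : ℤ), ?_⟩
    push_cast at hlift ⊢
    linear_combination -hlift

theorem isUnit_of_mul_self_eq_neg_one {R : Type*} [CommRing R] {c : R} (hc : c * c = -1) :
    IsUnit c :=
  .of_mul_eq_one (-c) (by linear_combination -hc)

namespace GaussianInt

variable {q : ℕ} {c : ZMod q}

def toZModProd (hc : c * c = -1) : GaussianInt →+* ZMod q × ZMod q :=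
  Zsqrtd.lift ⟨(c, -c), by ext <;> simp [hc]⟩

theorem toZModProd_apply (hc : c * c = -1) (x : GaussianInt) :
    toZModProd hc x = (x.re + x.im * c, x.re - x.im * c) := by
  ext <;> simp [toZModProd, Zsqrtd.lift, sub_eq_add_neg]

theorem toZModProd_surjective (hc : c * c = -1) (h2 : IsUnit (2 : ZMod q)) :
    Function.Surjective (toZModProd hc) := by
  rintro ⟨s, t⟩
  set i : ZMod q := ↑h2.unit⁻¹
  set j : ZMod q := ↑(isUnit_of_mul_self_eq_neg_one hc).unit⁻¹
  have hi : 2 * i = 1 := h2.mul_val_inv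
  have hj : j * c = 1 := (isUnit_of_mul_self_eq_neg_one hc).val_inv_mul
  refine ⟨⟨((s + t) * i).cast, ((s - t) * i * j).cast⟩, ?_⟩
  rw [toZModProd_apply]
  simp only [ZMod.intCast_zmod_cast]
  ext
  · linear_combination (s - t) * i * hj + s * hi
  · linear_combination -(s - t) * i * hj + t * hi

theorem ker_toZModProd (hc : c * c = -1) (h2 : IsUnit (2 : ZMod q)) :
    RingHom.ker (toZModProd hc) = Ideal.span {(q : GaussianInt)} := by
  ext x
  rw [RingHom.mem_ker, Ideal.mem_span_singleton, toZModProd_apply, Prod.mk_eq_zero,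
    ← Int.cast_natCast, Zsqrtd.intCast_dvd, ← ZMod.intCast_zmod_eq_zero_iff_dvd,
    ← ZMod.intCast_zmod_eq_zero_iff_dvd]
  constructor
  · rintro ⟨h₁, h₂⟩
    have hre : 2 * (x.re : ZMod q) = 0 := by linear_combination h₁ + h₂
    have him : 2 * c * (x.im : ZMod q) = 0 := by linear_combination h₁ - h₂
    exact ⟨h2.mul_right_eq_zero.mp hre,
      (h2.mul (isUnit_of_mul_self_eq_neg_one hc)).mul_right_eq_zero.mp him⟩
  · rintro ⟨h₁, h₂⟩
    simp [h₁, h₂]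

end GaussianInt

noncomputable def Zi.equivProd {q : ℕ} {c : ZMod q} (hc : c * c = -1) (h2 : IsUnit (2 : ZMod q)) :
    Zi q ≃+* ZMod q × ZMod q :=
  (Ideal.quotEquivOfEq (GaussianInt.ker_toZModProd hc h2).symm).trans
    (RingHom.quotientKerEquivOfSurjective (GaussianInt.toZModProd_surjective hc h2))

theorem stmt6 (p m : ℕ) (hp : p.Prime) (h1 : p % 4 = 1) (hm : 1 ≤ m) :
    Bipancyclic (zdGraph (Zi (p ^ m))) ↔ m = 1 := by
  have := Fact.mk hp
  have hp3 : 3 ≤ p := by have := hp.two_le; omega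
  obtain ⟨c, hc⟩ := ZMod.isSquare_neg_one_prime_pow h1 m
  have h2 : IsUnit (2 : ZMod (p ^ m)) := by
    have : Nat.Coprime 2 (p ^ m) :=
      ((Nat.coprime_primes Nat.prime_two hp).mpr (by omega)).pow_right m
    exact_mod_cast (ZMod.isUnit_iff_coprime 2 (p ^ m)).mpr this
  rw [(Zi.equivProd hc.symm h2).zdGraphIso.bipancyclic_iff]
  constructor
  · intro h
    by_contra hm1
    have : Nontrivial (ZMod (p ^ m)) :=
      ZMod.nontrivial_iff.mpr (Nat.one_lt_pow (by omega) hp.one_lt).ne'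
    exact not_bipancyclic_zdGraph_prod
      (ZMod.card_lt_card_units_mul_card_nonunits hp hp3 (by omega)) h
  · rintro rfl
    rw [pow_one, ← (completeBipartiteGraphIsoZdGraphProd (ZMod p)).bipancyclic_iff]
    exact bipancyclic_completeBipartiteGraph rfl
      (by rw [Nat.card_eq_fintype_card, ZMod.card_units]; omega)
end

section
/- If n = p₁p₂⋯p_k is a product of at least two distinct primes p₁ < p₂ < ⋯ < p_k, then the zero-divisor graph Γ(ℤ_n) is not Hamiltonian. -/
open SimpleGraph

/-!
Let `q` be the largest prime factor of `n`. The kernel `P` of `ℤ_n → ℤ_q` is a prime ideal, so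
a vertex outside `P` has all its neighbours in `P ∖ {0}`; following a Hamiltonian cycle, the
successor map sends the nonunits outside `P` injectively into `P ∖ {0}`. Hence
`n - φ(n) < 2 #P = 2n/q`. But a second prime `p < q` dividing `n` gives
`φ(n)/n ≤ (1 - 1/p)(1 - 1/q) ≤ 1 - 2/q`.
-/

open Finset

namespace SimpleGraph.Walk

variable {V : Type*} {G : SimpleGraph V} {a : V} {p : G.Walk a a}

lemma IsCycle.exists_mem_darts_fst_eq (hp : p.IsCycle) {v : V} (hv : v ∈ p.support) :
    ∃ d ∈ p.darts, d.fst = v := by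
  cases p with
  | nil => exact absurd rfl hp.ne_nil
  | cons h q =>
    rw [support_cons, List.mem_cons, ← map_fst_darts_append, List.mem_append, List.mem_map,
      List.mem_singleton, or_comm, or_assoc, or_self] at hv
    rcases hv with ⟨d, hd, rfl⟩ | rfl
    · exact ⟨d, List.mem_cons_of_mem _ hd, rfl⟩
    · exact ⟨_, List.mem_cons_self .., rfl⟩

lemma IsCycle.injOn_darts_snd (hp : p.IsCycle) : Set.InjOn (·.snd) {d | d ∈ p.darts} :=
  List.inj_on_of_nodup_map (by rw [map_snd_darts]; exact hp.support_nodup)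

end SimpleGraph.Walk

lemma IsHamiltonianGraph.card_le_card_of_forall_adj {V : Type*} {G : SimpleGraph V}
    (hG : IsHamiltonianGraph G) {S T : Finset V} (hST : ∀ v ∈ S, ∀ w, G.Adj v w → w ∈ T) :
    #S ≤ #T := by
  classical
  obtain ⟨a, p, hp, hsupp⟩ := hG
  calc #S ≤ #{d ∈ p.darts.toFinset | d.fst ∈ S} := by
        refine card_le_card_of_surjOn (·.fst) fun v hv => ?_
        obtain ⟨d, hd, rfl⟩ := hp.exists_mem_darts_fst_eq (hsupp v)
        exact ⟨d, by simpa [hd] using hv, rfl⟩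
    _ ≤ #T := by
        refine card_le_card_of_injOn (·.snd) (fun d hd => ?_) fun d hd d' hd' => ?_
        · exact hST _ (mem_filter.1 hd).2 _ d.adj
        · exact hp.injOn_darts_snd (by simpa using (mem_filter.1 hd).1)
            (by simpa using (mem_filter.1 hd').1)

lemma mem_zdVertex_of_not_isUnit {R : Type*} [CommRing R] [Finite R] {x : R} (hx0 : x ≠ 0)
    (hx : ¬IsUnit x) : x ∈ zdVertex R := by
  rw [isUnit_iff_mem_nonZeroDivisors_of_finite, notMem_nonZeroDivisors_iff_left] at hx
  obtain ⟨y, hxy, hy⟩ := hx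
  exact ⟨hx0, y, hy, hxy⟩

lemma IsHamiltonianGraph.card_le_card_of_mul_eq_zero {R : Type*} [CommRing R]
    (hR : IsHamiltonianGraph (zdGraph R)) {S T : Finset R} (hS : ∀ x ∈ S, x ∈ zdVertex R)
    (hST : ∀ x ∈ S, ∀ y ∈ zdVertex R, x * y = 0 → y ∈ T) : #S ≤ #T := by
  classical
  calc #S = #(S.subtype (· ∈ zdVertex R)) := by rw [card_subtype, filter_true_of_mem hS]
    _ ≤ #(T.subtype (· ∈ zdVertex R)) :=
        hR.card_le_card_of_forall_adj fun v hv w hvw => by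
          rw [mem_subtype] at hv ⊢
          exact hST _ hv _ w.2 hvw.2
    _ ≤ #T := by rw [card_subtype]; exact card_filter_le _ _

theorem card_lt_card_units_add_two_mul_card_of_isHamiltonian {R : Type*} [CommRing R] [Finite R]
    (hR : IsHamiltonianGraph (zdGraph R)) (P : Ideal R) [P.IsPrime] :
    Nat.card R < Nat.card Rˣ + 2 * Nat.card P := by
  classical
  have := Fintype.ofFinite R
  set N : Finset R := {x | ¬IsUnit x}
  set Q : Finset R := {x | x ∈ P}
  have hcardR : Nat.card R = Nat.card Rˣ + #N := by
    rw [Nat.card_congr Submonoid.unitsTypeEquivIsUnitSubmonoid.toEquiv, Nat.card_eq_fintype_card,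
      Nat.card_eq_fintype_card, Fintype.card_subtype]
    simp only [IsUnit.mem_submonoid_iff]
    exact (card_filter_add_card_filter_not _).symm
  have hcardP : Nat.card P = #Q := by
    rw [Nat.card_eq_fintype_card, Fintype.card_subtype]
  have hQN : N.filter (· ∈ P) = Q := by
    ext x
    simp only [N, Q, mem_filter, mem_univ, true_and, and_iff_right_iff_imp]
    exact fun hx hu => Ideal.IsPrime.ne_top ‹_› (Ideal.eq_top_of_isUnit_mem P hx hu)
  have hzero : 0 ∈ Q := by simp [Q]
  have hout : #(N.filter (· ∉ P)) ≤ #(Q.erase 0) := by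
    refine hR.card_le_card_of_mul_eq_zero (fun x hx => ?_) fun x hx y hy hxy => ?_
    · simp only [N, mem_filter, mem_univ, true_and] at hx
      exact mem_zdVertex_of_not_isUnit (fun h => hx.2 (h ▸ P.zero_mem)) hx.1
    · simp only [N, mem_filter, mem_univ, true_and] at hx
      simp only [Q, mem_erase, mem_filter, mem_univ, true_and]
      exact ⟨hy.1, ((‹P.IsPrime›.mem_or_mem (hxy ▸ P.zero_mem)).resolve_left hx.2)⟩
  have hsplit : #Q + #(N.filter (· ∉ P)) = #N := hQN ▸ card_filter_add_card_filter_not _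
  rw [card_erase_of_mem hzero] at hout
  have := card_pos.2 ⟨0, hzero⟩
  omega

lemma RingHom.card_ker_mul_card_of_surjective {R S : Type*} [Ring R] [Ring S] (f : R →+* S)
    (hf : Function.Surjective f) : Nat.card (ker f) * Nat.card S = Nat.card R := by
  rw [AddSubgroup.card_eq_card_quotient_mul_card_addSubgroup (ker f).toAddSubgroup, mul_comm,
    ← Nat.card_congr (quotientKerEquivOfSurjective hf).toEquiv]
  rfl

lemma ZMod.card_ker_castHom {n q : ℕ} (hq : 0 < q) (hqn : q ∣ n) :
    Nat.card (RingHom.ker (ZMod.castHom hqn (ZMod q))) = n / q := by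
  have := (ZMod.castHom hqn (ZMod q)).card_ker_mul_card_of_surjective (ZMod.castHom_surjective hqn)
  rw [Nat.card_zmod, Nat.card_zmod] at this
  exact (Nat.div_eq_of_eq_mul_left hq this.symm).symm

open Nat in
theorem Nat.totient_add_two_mul_div_le {n p q : ℕ} (hp : p.Prime) (hq : q.Prime) (hpq : p < q)
    (hpn : p ∣ n) (hqn : q ∣ n) : φ n + 2 * (n / q) ≤ n := by
  rcases eq_or_ne n 0 with rfl | hn
  · simp
  have hp' : p ∈ n.primeFactors := mem_primeFactors.2 ⟨hp, hpn, hn⟩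
  have hq' : q ∈ n.primeFactors.erase p :=
    mem_erase.2 ⟨hpq.ne', mem_primeFactors.2 ⟨hq, hqn, hn⟩⟩
  have hfactor : ∀ r ∈ n.primeFactors, 0 ≤ 1 - (r : ℚ)⁻¹ ∧ 1 - (r : ℚ)⁻¹ ≤ 1 := fun r hr => by
    have : (1 : ℚ) ≤ r := by exact_mod_cast (prime_of_mem_primeFactors hr).one_le
    exact ⟨sub_nonneg.2 (inv_le_one_of_one_le₀ this), by simp⟩
  have hprod : ∏ r ∈ n.primeFactors, (1 - (r : ℚ)⁻¹) ≤ (1 - (p : ℚ)⁻¹) * (1 - (q : ℚ)⁻¹) := by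
    rw [← mul_prod_erase _ _ hp', ← mul_prod_erase _ _ hq', ← mul_assoc]
    refine mul_le_of_le_one_right
      (mul_nonneg (hfactor p hp').1 (hfactor q (mem_of_mem_erase hq')).1) ?_
    exact prod_le_one (fun r hr => (hfactor r (mem_of_mem_erase (mem_of_mem_erase hr))).1)
      fun r hr => (hfactor r (mem_of_mem_erase (mem_of_mem_erase hr))).2
  obtain ⟨t, rfl⟩ := hqn
  rw [mul_div_cancel_left₀ _ hq.ne_zero]
  have hφ := totient_eq_mul_prod_factors (q * t)
  have hp1 : (p : ℚ) + 1 ≤ q := by exact_mod_cast hpq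
  have hp0 : (0 : ℚ) < p := by exact_mod_cast hp.pos
  have hq0 : (0 : ℚ) < q := by exact_mod_cast hq.pos
  have ht0 : (0 : ℚ) ≤ t := t.cast_nonneg
  qify
  calc (φ (q * t) : ℚ) + 2 * t ≤ q * t * ((1 - (p : ℚ)⁻¹) * (1 - (q : ℚ)⁻¹)) + 2 * t := by
        rw [hφ, Nat.cast_mul]; gcongr
    _ = t * ((q - 1) * (p - 1) + 2 * p) / p := by field_simp
    _ ≤ t * (q * p) / p := by gcongr; nlinarith
    _ = q * t := by field_simp

theorem stmt9 (n : ℕ) (s : Finset ℕ) (hp : ∀ p ∈ s, p.Prime) (hcard : 2 ≤ s.card)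
    (hn : n = ∏ p ∈ s, p) :
    ¬ IsHamiltonianGraph (zdGraph (ZMod n)) := by
  intro hG
  have hs : s.Nonempty := card_pos.1 (by omega)
  set q := s.max' hs
  have hqs : q ∈ s := s.max'_mem hs
  obtain ⟨p, hps⟩ : (s.erase q).Nonempty := by rw [← card_pos, card_erase_of_mem hqs]; omega
  have hpq : p < q := lt_of_le_of_ne (s.le_max' p (mem_of_mem_erase hps)) (ne_of_mem_erase hps)
  have hpn : p ∣ n := hn ▸ dvd_prod_of_mem _ (mem_of_mem_erase hps)
  have hqn : q ∣ n := hn ▸ dvd_prod_of_mem _ hqs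
  have : NeZero n := ⟨hn ▸ prod_ne_zero_iff.2 fun r hr => (hp r hr).ne_zero⟩
  have : Fact q.Prime := ⟨hp q hqs⟩
  have := RingHom.ker_isPrime (ZMod.castHom hqn (ZMod q))
  have hlt := card_lt_card_units_add_two_mul_card_of_isHamiltonian hG
    (RingHom.ker (ZMod.castHom hqn (ZMod q)))
  rw [Nat.card_zmod, ZMod.card_ker_castHom (hp q hqs).pos, Nat.card_eq_fintype_card,
    ZMod.card_units_eq_totient] at hlt
  have := Nat.totient_add_two_mul_div_le (hp p (mem_of_mem_erase hps)) (hp q hqs) hpq hpn hqn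
  omega
end

section
/- For a prime p and integer m ≥ 1, the zero-divisor graph Γ(ℤ_{p^m}) is Hamiltonian if and only if m = 2 and p ≥ 5. -/
open SimpleGraph

/-!
The nonzero zero-divisors of `ℤ/p^m` are exactly the nonzero multiples of `p`, and there are
`p^(m-1) - 1` of them. For `m = 1` there are none; for `m = 2` any two of them multiply to zero,
so the graph is complete on `p - 1` vertices and is Hamiltonian iff `p - 1 ≥ 3`. For `m ≥ 3`, a
Hamiltonian cycle yields an injective "successor" map along edges. It must send each of the
`p^(m-1) - p^(m-2)` vertices of `p`-adic valuation one to a vertex annihilated by it, i.e. to one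
of the `p - 1` nonzero multiples of `p^(m-1)`, which is too few.
-/

namespace IsHamiltonianGraph

variable {V : Type*} {G : SimpleGraph V}

theorem exists_injective_adj (hG : IsHamiltonianGraph G) :
    ∃ f : V → V, Function.Injective f ∧ ∀ v, G.Adj v (f v) := by
  obtain ⟨a, c, hc, hall⟩ := hG
  have hlen := hc.three_le_length
  have hindex : ∀ v, ∃ i < c.length, c.getVert i = v := by
    intro v
    obtain ⟨i, rfl, hi⟩ := Walk.mem_support_iff_exists_getVert.mp (hall v)
    rcases hi.lt_or_eq with hi | rfl
    · exact ⟨i, hi, rfl⟩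
    · exact ⟨0, by omega, by simp⟩
  choose index index_lt getVert_index using hindex
  refine ⟨fun v => c.getVert (index v + 1), fun u v huv => ?_, fun v => ?_⟩
  · have := hc.getVert_injOn (by grind [index_lt u]) (by grind [index_lt v]) huv
    rw [← getVert_index u, ← getVert_index v]
    grind
  · simpa [getVert_index] using c.adj_getVert_succ (index_lt v)

theorem three_le_card [Finite V] (hG : IsHamiltonianGraph G) : 3 ≤ Nat.card V := by
  obtain ⟨a, c, hc, -⟩ := hG
  have hlen := hc.three_le_length
  have hinj : Function.Injective fun i : Fin 3 => c.getVert i := fun i j hij =>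
    Fin.ext (hc.getVert_injOn' (by simp; omega) (by simp; omega) hij)
  simpa using Nat.card_le_card_of_injective _ hinj

theorem ncard_le_ncard (hG : IsHamiltonianGraph G) {S T : Set V} (hT : T.Finite)
    (hST : ∀ s ∈ S, ∀ v, G.Adj s v → v ∈ T) : S.ncard ≤ T.ncard := by
  obtain ⟨f, hf, hadj⟩ := hG.exists_injective_adj
  exact Set.ncard_le_ncard_of_injOn f (fun s hs => hST s hs _ (hadj s)) hf.injOn hT

end IsHamiltonianGraph

theorem isHamiltonianGraph_iff_three_le_card_of_forall_adj {V : Type*} [Finite V]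
    {G : SimpleGraph V} (hG : ∀ x y, x ≠ y → G.Adj x y) :
    IsHamiltonianGraph G ↔ 3 ≤ Nat.card V := by
  classical
  refine ⟨IsHamiltonianGraph.three_le_card, fun h3 => ?_⟩
  obtain ⟨k, hk⟩ : ∃ k, Nat.card V = k + 3 := ⟨Nat.card V - 3, by omega⟩
  let e := (Finite.equivFinOfCardEq hk).symm
  let φ : cycleGraph (k + 3) →g G := ⟨e, fun h => hG _ _ (e.injective.ne h.ne)⟩
  have hcycle : (cycleGraph.cycle k).IsHamiltonianCycle :=
    Walk.isHamiltonianCycle_iff_isCycle_and_length_eq.mpr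
      ⟨cycleGraph.isCycle_cycle, by simp [cycleGraph.length_cycle]⟩
  have hmap := hcycle.map (f := φ) e.bijective
  exact ⟨_, _, hmap.isCycle, hmap.mem_support⟩

theorem ZMod.mul_eq_zero_iff_dvd_val_mul_val {n : ℕ} (x y : ZMod n) :
    x * y = 0 ↔ n ∣ x.val * y.val := by
  rw [← ZMod.val_eq_zero, ZMod.val_mul, Nat.dvd_iff_mod_eq_zero]

def nonzeroMultiples (n d : ℕ) : Set (ZMod n) := {x | x ≠ 0 ∧ d ∣ x.val}

theorem nonzeroMultiples_subset {n d e : ℕ} (h : d ∣ e) :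
    nonzeroMultiples n e ⊆ nonzeroMultiples n d :=
  fun _ ⟨hx, hex⟩ => ⟨hx, h.trans hex⟩

theorem nonzeroMultiples_eq_image {n d : ℕ} [NeZero n] (hd : d ∣ n) :
    nonzeroMultiples n d = (fun j : ℕ => ((d * j : ℕ) : ZMod n)) '' Set.Ioo 0 (n / d) := by
  ext x
  constructor
  · rintro ⟨hx, j, hj⟩
    refine ⟨j, ⟨Nat.pos_of_ne_zero ?_, ?_⟩, ?_⟩
    · rintro rfl
      exact hx (by simpa using hj)
    · exact (Nat.lt_div_iff_mul_lt' hd j).mpr (hj ▸ x.val_lt)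
    · simp only [← hj, ZMod.natCast_zmod_val]
  · rintro ⟨j, ⟨hj0, hj⟩, rfl⟩
    rw [Nat.lt_div_iff_mul_lt' hd] at hj
    refine ⟨fun h => ?_, by rw [ZMod.val_cast_of_lt hj]; exact dvd_mul_right d j⟩
    have hd0 : 0 < d := Nat.pos_of_dvd_of_pos hd (NeZero.pos n)
    have := congrArg ZMod.val h
    rw [ZMod.val_cast_of_lt hj, ZMod.val_zero] at this
    exact (Nat.mul_pos hd0 hj0).ne' this

theorem ncard_nonzeroMultiples {n d : ℕ} [NeZero n] (hd : d ∣ n) :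
    (nonzeroMultiples n d).ncard = n / d - 1 := by
  rw [nonzeroMultiples_eq_image hd, Set.InjOn.ncard_image, Set.ncard_Ioo_nat, Nat.sub_zero]
  intro i hi j hj hij
  have hi' := (Nat.lt_div_iff_mul_lt' hd i).mp hi.2
  have hj' := (Nat.lt_div_iff_mul_lt' hd j).mp hj.2
  have := congrArg ZMod.val hij
  simp only [ZMod.val_cast_of_lt hi', ZMod.val_cast_of_lt hj'] at this
  exact Nat.eq_of_mul_eq_mul_left (Nat.pos_of_dvd_of_pos hd (NeZero.pos n)) this

section PrimePower

variable {p m : ℕ}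

theorem zdVertex_zmod_prime_pow (hp : p.Prime) (hm : 1 ≤ m) :
    zdVertex (ZMod (p ^ m)) = nonzeroMultiples (p ^ m) p := by
  have : NeZero (p ^ m) := ⟨pow_ne_zero m hp.ne_zero⟩
  ext x
  constructor
  · rintro ⟨hx, y, hy, hxy⟩
    refine ⟨hx, by_contra fun hpx => hy ?_⟩
    have hunit : IsUnit x := by
      rw [← ZMod.natCast_zmod_val x, ZMod.isUnit_iff_coprime]
      exact ((hp.coprime_iff_not_dvd.mpr hpx).pow_left m).symm
    exact hunit.mul_right_eq_zero.mp hxy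
  · rintro ⟨hx, k, hk⟩
    obtain ⟨j, rfl⟩ : ∃ j, m = j + 1 := ⟨m - 1, by omega⟩
    have hlt : p ^ j < p ^ (j + 1) := Nat.pow_lt_pow_right hp.one_lt j.lt_succ_self
    refine ⟨hx, (p ^ j : ℕ), fun h => ?_, ?_⟩
    · rw [ZMod.natCast_eq_zero_iff] at h
      exact (Nat.le_of_dvd (pow_pos hp.pos j) h).not_gt hlt
    · rw [ZMod.mul_eq_zero_iff_dvd_val_mul_val, ZMod.val_cast_of_lt hlt, hk]
      exact ⟨k, by ring⟩

theorem card_zdVertex_zmod_prime_pow (hp : p.Prime) (hm : 1 ≤ m) :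
    Nat.card (zdVertex (ZMod (p ^ m))) = p ^ (m - 1) - 1 := by
  have : NeZero (p ^ m) := ⟨pow_ne_zero m hp.ne_zero⟩
  have hdiv : p ^ m / p = p ^ (m - 1) :=
    Nat.div_eq_of_eq_mul_left hp.pos (by rw [← pow_succ, Nat.sub_add_cancel hm])
  rw [Nat.card_coe_set_eq, zdVertex_zmod_prime_pow hp hm,
    ncard_nonzeroMultiples (dvd_pow_self p (by omega)), hdiv]

theorem ncard_nonzeroMultiples_prime_pow {k : ℕ} (hp : p.Prime) (hk : k ≤ m) :
    (nonzeroMultiples (p ^ m) (p ^ k)).ncard = p ^ (m - k) - 1 := by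
  have : NeZero (p ^ m) := ⟨pow_ne_zero m hp.ne_zero⟩
  rw [ncard_nonzeroMultiples (pow_dvd_pow p hk), Nat.pow_div hk hp.pos]

theorem zdGraph_zmod_prime_sq_adj (hp : p.Prime) {x y : zdVertex (ZMod (p ^ 2))} (hxy : x ≠ y) :
    (zdGraph (ZMod (p ^ 2))).Adj x y := by
  have hdvd (v : zdVertex (ZMod (p ^ 2))) : p ∣ (v : ZMod (p ^ 2)).val :=
    ((zdVertex_zmod_prime_pow hp one_le_two).subset v.2).2
  obtain ⟨a, ha⟩ := hdvd x
  obtain ⟨b, hb⟩ := hdvd y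
  refine ⟨hxy, ?_⟩
  rw [ZMod.mul_eq_zero_iff_dvd_val_mul_val, ha, hb]
  exact ⟨a * b, by ring⟩

theorem mem_nonzeroMultiples_of_mul_eq_zero (hp : p.Prime) (hm : 1 ≤ m) {x y : ZMod (p ^ m)}
    (hx : x ∈ nonzeroMultiples (p ^ m) p \ nonzeroMultiples (p ^ m) (p ^ 2)) (hy : y ≠ 0)
    (hxy : x * y = 0) : y ∈ nonzeroMultiples (p ^ m) (p ^ (m - 1)) := by
  obtain ⟨⟨hx0, u, hu⟩, hx2⟩ := hx
  have hpu : ¬ p ∣ u := by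
    rintro ⟨v, rfl⟩
    exact hx2 ⟨hx0, ⟨v, by rw [hu]; ring⟩⟩
  have hpow : p ^ m = p * p ^ (m - 1) := by rw [← pow_succ', Nat.sub_add_cancel hm]
  rw [ZMod.mul_eq_zero_iff_dvd_val_mul_val, hu, mul_assoc] at hxy
  have := Nat.dvd_of_mul_dvd_mul_left hp.pos ((dvd_of_eq hpow.symm).trans hxy)
  exact ⟨hy, ((hp.coprime_iff_not_dvd.mpr hpu).pow_left _).dvd_of_dvd_mul_left this⟩

end PrimePower

theorem not_isHamiltonianGraph_zdGraph_zmod_prime_pow {p m : ℕ} (hp : p.Prime) (hm : 3 ≤ m) :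
    ¬ IsHamiltonianGraph (zdGraph (ZMod (p ^ m))) := by
  intro hG
  have : NeZero (p ^ m) := ⟨pow_ne_zero m hp.ne_zero⟩
  set N := nonzeroMultiples (p ^ m)
  have hV : zdVertex (ZMod (p ^ m)) = N p := zdVertex_zmod_prime_pow hp (by omega)
  have hcard_valuation_one : (N p \ N (p ^ 2)).ncard + (p ^ (m - 2) - 1) = p ^ (m - 1) - 1 := by
    rw [← ncard_nonzeroMultiples_prime_pow hp (by omega),
      ← card_zdVertex_zmod_prime_pow hp (by omega), Nat.card_coe_set_eq, hV]
    exact Set.ncard_sdiff_add_ncard_of_subset (nonzeroMultiples_subset (dvd_pow_self p two_ne_zero))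
  have hcard_top : (N (p ^ (m - 1))).ncard = p - 1 := by
    rw [ncard_nonzeroMultiples_prime_pow hp (by omega), Nat.sub_sub_self (by omega), pow_one]
  have hHall : (N p \ N (p ^ 2)).ncard ≤ (N (p ^ (m - 1))).ncard := by
    have := hG.ncard_le_ncard (S := Subtype.val ⁻¹' (N p \ N (p ^ 2)))
      (T := Subtype.val ⁻¹' N (p ^ (m - 1))) (Set.toFinite _)
      (fun _ hs v hsv => mem_nonzeroMultiples_of_mul_eq_zero hp (by omega) hs v.2.1 hsv.2)
    rwa [Set.ncard_preimage_of_injective_subset_range Subtype.val_injective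
        (by rw [Subtype.range_coe, hV]; exact Set.sdiff_subset),
      Set.ncard_preimage_of_injective_subset_range Subtype.val_injective
        (by rw [Subtype.range_coe, hV]; exact nonzeroMultiples_subset (dvd_pow_self p (by omega)))]
      at this
  obtain ⟨k, rfl⟩ : ∃ k, m = k + 3 := ⟨m - 3, by omega⟩
  simp only [show k + 3 - 1 = k + 2 by omega, show k + 3 - 2 = k + 1 by omega]
    at hcard_valuation_one
  have hp_le : p ≤ p ^ (k + 1) := Nat.le_self_pow k.succ_ne_zero p
  have hdouble : 2 * p ^ (k + 1) ≤ p ^ (k + 2) := by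
    rw [pow_succ' p (k + 1)]
    exact Nat.mul_le_mul_right _ hp.two_le
  have := hp.two_le
  omega

theorem stmt10 (p m : ℕ) (hp : p.Prime) (hm : 1 ≤ m) :
    IsHamiltonianGraph (zdGraph (ZMod (p ^ m))) ↔ (m = 2 ∧ 5 ≤ p) := by
  have : NeZero p := ⟨hp.ne_zero⟩
  obtain rfl | rfl | hm3 : m = 1 ∨ m = 2 ∨ 3 ≤ m := by omega
  · refine iff_of_false (fun hG => ?_) (by omega)
    simpa [card_zdVertex_zmod_prime_pow hp le_rfl] using hG.three_le_card
  · rw [isHamiltonianGraph_iff_three_le_card_of_forall_adj (fun _ _ => zdGraph_zmod_prime_sq_adj hp),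
      card_zdVertex_zmod_prime_pow hp one_le_two]
    simp only [Nat.reduceSub, pow_one, true_and]
    have : p ≠ 4 := by rintro rfl; norm_num at hp
    omega
  · exact iff_of_false (not_isHamiltonianGraph_zdGraph_zmod_prime_pow hp hm3) (by omega)
end

section
/- For distinct primes p < q, the zero-divisor graph Γ(ℤ_{p²q²}) is not Hamiltonian. -/
open SimpleGraph

/-!
Write `p²q² = p · (pq²)`. For `u` coprime to `pq²`, the element `p·u` is a vertex of
`Γ(ℤ_{p²q²})`, and since `u` is a unit every neighbour `y` of `p·u` satisfies `p·y = 0`; the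
nonzero such `y` are the nonzero multiples of `pq²`, so there are at most `p - 1` of them.
Sending each vertex to its successor on a Hamiltonian cycle is injective and maps every vertex
to a neighbour, so the `φ(pq²) = (p - 1)q(q - 1) ≥ p` vertices `p·u` would inject into a set of
at most `p - 1` vertices.
-/

open scoped Nat

namespace IsHamiltonianGraph

variable {V : Type*} {G : SimpleGraph V}

theorem finite (hG : IsHamiltonianGraph G) : Finite V := by
  obtain ⟨_, w, -, hw⟩ := hG
  exact Set.finite_univ_iff.mp (w.support.finite_toSet.subset fun v _ => hw v)

theorem exists_perm_adj (hG : IsHamiltonianGraph G) :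
    ∃ σ : Equiv.Perm V, ∀ v, G.Adj v (σ v) := by
  obtain ⟨a, w, hw, hsupp⟩ := hG
  obtain ⟨M, hM⟩ : ∃ M, w.length = M + 1 :=
    ⟨w.length - 1, by have := hw.three_le_length; omega⟩
  let F : Fin (M + 1) → V := fun i => w.getVert i
  have hinj : F.Injective := fun i j hij =>
    Fin.ext (hw.getVert_injOn' (by simp only [Set.mem_ofPred_eq]; omega)
      (by simp only [Set.mem_ofPred_eq]; omega) hij)
  have hsurj : F.Surjective := by
    intro v
    obtain ⟨k, rfl, hk⟩ := Walk.mem_support_iff_exists_getVert.mp (hsupp v)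
    rcases hk.lt_or_eq with hk | rfl
    · exact ⟨⟨k, by omega⟩, rfl⟩
    · exact ⟨0, by simp [F, Walk.getVert_length]⟩
  let E := Equiv.ofBijective F ⟨hinj, hsurj⟩
  refine ⟨E.symm.trans ((finRotate _).trans E), fun v => ?_⟩
  obtain ⟨i, rfl⟩ := E.surjective v
  have hsucc : F (finRotate _ i) = w.getVert (i + 1) := by
    rcases eq_or_ne i (Fin.last M) with rfl | hi
    · simp [F, ← hM, Walk.getVert_length]
    · simp only [F, coe_finRotate_of_ne_last hi]
  have hσ : (E.symm.trans ((finRotate _).trans E)) (E i) = F (finRotate _ i) := by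
    simp only [Equiv.trans_apply, Equiv.symm_apply_apply]; rfl
  rw [hσ, hsucc]
  exact w.adj_getVert_succ (by omega)

theorem ncard_le_ncard_of_forall_adj {S T : Set V} (hG : IsHamiltonianGraph G)
    (hTS : ∀ t ∈ T, ∀ v, G.Adj t v → v ∈ S) : T.ncard ≤ S.ncard := by
  have := hG.finite
  obtain ⟨σ, hσ⟩ := hG.exists_perm_adj
  exact Set.ncard_le_ncard_of_injOn σ (fun t ht => hTS t ht _ (hσ t)) σ.injective.injOn

end IsHamiltonianGraph

namespace ZMod

variable {a n : ℕ}

theorem natCast_mul_eq_zero_iff_dvd_val [NeZero (a * n)] (y : ZMod (a * n)) :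
    (a : ZMod (a * n)) * y = 0 ↔ n ∣ y.val := by
  have ha : 0 < a := Nat.pos_of_mul_pos_right (NeZero.pos (a * n))
  rw [← natCast_zmod_val y, ← Nat.cast_mul, natCast_eq_zero_iff, val_natCast_of_lt y.val_lt,
    Nat.mul_dvd_mul_iff_left ha]

theorem ncard_setOf_ne_zero_natCast_mul_eq_zero_le [NeZero (a * n)] :
    {y : ZMod (a * n) | y ≠ 0 ∧ (a : ZMod (a * n)) * y = 0}.ncard ≤ a - 1 := by
  calc {y : ZMod (a * n) | y ≠ 0 ∧ (a : ZMod (a * n)) * y = 0}.ncard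
      ≤ (↑((Finset.Ioo 0 a).image fun j => ((n * j : ℕ) : ZMod (a * n))) :
          Set (ZMod (a * n))).ncard := by
        refine Set.ncard_le_ncard ?_ (Set.toFinite _)
        rintro y ⟨hy0, hy⟩
        obtain ⟨j, hj⟩ := (natCast_mul_eq_zero_iff_dvd_val y).mp hy
        have hj0 : j ≠ 0 := by rintro rfl; exact hy0 ((val_eq_zero y).mp (by simpa using hj))
        have hja : j < a := by
          have := y.val_lt
          rw [hj, mul_comm a] at this
          exact Nat.lt_of_mul_lt_mul_left this
        simp only [Finset.coe_image, Finset.coe_Ioo, Set.mem_image, Set.mem_Ioo]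
        exact ⟨j, ⟨Nat.pos_of_ne_zero hj0, hja⟩, by rw [← hj, natCast_zmod_val]⟩
    _ ≤ a - 1 := by
        rw [Set.ncard_coe_finset]
        exact (Finset.card_image_le).trans (Nat.card_Ioo 0 a).le

theorem natCast_mul_mem_zdVertex [NeZero (a * n)] (ha : 1 < a) (han : a ∣ n) {u : ℕ}
    (hu : n.Coprime u) :
    ((a * u : ℕ) : ZMod (a * n)) ∈ zdVertex (ZMod (a * n)) := by
  have hn : n ≠ 0 := right_ne_zero_of_mul (NeZero.ne (a * n))
  refine ⟨?_, n, ?_, ?_⟩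
  · rw [Ne, natCast_eq_zero_iff, Nat.mul_dvd_mul_iff_left (by omega)]
    intro hnu
    have := Nat.le_of_dvd (by omega) (hu.eq_one_of_dvd hnu ▸ han)
    omega
  · rw [Ne, natCast_eq_zero_iff]
    exact Nat.not_dvd_of_pos_of_lt (Nat.pos_of_ne_zero hn) (lt_mul_left (Nat.pos_of_ne_zero hn) ha)
  · rw [← Nat.cast_mul, natCast_eq_zero_iff, mul_right_comm]
    exact Nat.dvd_mul_right _ _

theorem natCast_mul_eq_zero_of_mul_eq_zero (han : a ∣ n) {u : ℕ} (hu : n.Coprime u)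
    {y : ZMod (a * n)} (hy : ((a * u : ℕ) : ZMod (a * n)) * y = 0) :
    (a : ZMod (a * n)) * y = 0 := by
  have hunit : IsUnit (u : ZMod (a * n)) :=
    (isUnit_iff_coprime u _).mpr ((hu.symm.coprime_dvd_right han).mul_right hu.symm)
  rwa [Nat.cast_mul, mul_right_comm, hunit.mul_left_eq_zero] at hy

theorem injOn_natCast_mul [NeZero (a * n)] :
    Set.InjOn (fun u : ℕ => ((a * u : ℕ) : ZMod (a * n))) (Set.Iio n) := by
  have ha : 0 < a := Nat.pos_of_mul_pos_right (NeZero.pos (a * n))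
  intro u (hu : u < n) v (hv : v < n) huv
  have := congrArg val huv
  rwa [val_natCast_of_lt (by nlinarith), val_natCast_of_lt (by nlinarith),
    Nat.mul_left_cancel_iff ha] at this

end ZMod

theorem Nat.Prime.le_totient_mul_sq {p q : ℕ} (hp : p.Prime) (hq : q.Prime) :
    p ≤ φ (p * q ^ 2) :=
  calc p ≤ (p - 1) * 2 := by have := hp.two_le; omega
    _ ≤ (p - 1) * (q * (q - 1)) :=
        Nat.mul_le_mul_left _ (Nat.mul_le_mul hq.two_le (by have := hq.two_le; omega) :
          2 * 1 ≤ q * (q - 1))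
    _ = φ p * φ (q ^ 2) := by
        rw [Nat.totient_prime hp, Nat.totient_prime_pow hq two_pos]; norm_num
    _ ≤ φ (p * q ^ 2) := Nat.totient_super_multiplicative _ _

theorem not_isHamiltonianGraph_zdGraph_zmod {a n : ℕ} (ha : 1 < a) (han : a ∣ n)
    (h : a ≤ φ n) : ¬ IsHamiltonianGraph (zdGraph (ZMod (a * n))) := by
  intro hG
  have hn : 0 < n := Nat.totient_pos.mp (by omega)
  have : NeZero (a * n) := ⟨by positivity⟩
  set R := ZMod (a * n)
  let T : Set (zdVertex R) := {x | ∀ y : R, (x : R) * y = 0 → (a : R) * y = 0}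
  let S : Set (zdVertex R) := {y | (a : R) * y = 0}
  have hTS : T.ncard ≤ S.ncard := hG.ncard_le_ncard_of_forall_adj fun t ht v hv => ht v hv.2
  have hS : S.ncard ≤ a - 1 := by
    rw [← Set.ncard_image_of_injective S Subtype.val_injective]
    refine le_trans (Set.ncard_le_ncard ?_ (Set.toFinite _))
      ZMod.ncard_setOf_ne_zero_natCast_mul_eq_zero_le
    rintro _ ⟨y, hy, rfl⟩
    exact ⟨y.2.1, hy⟩
  have hT : φ n ≤ T.ncard := by
    rw [Nat.totient_eq_card_coprime, ← Set.ncard_coe_finset,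
      ← ((ZMod.injOn_natCast_mul (a := a) (n := n)).mono ?_).ncard_image,
      ← Set.ncard_image_of_injective T Subtype.val_injective]
    · refine Set.ncard_le_ncard ?_ (Set.toFinite _)
      rintro _ ⟨u, hu, rfl⟩
      simp only [Finset.coe_filter, Finset.mem_range, Set.mem_ofPred_eq] at hu
      exact ⟨⟨_, ZMod.natCast_mul_mem_zdVertex ha han hu.2⟩,
        fun y => ZMod.natCast_mul_eq_zero_of_mul_eq_zero han hu.2, rfl⟩
    · intro u hu
      exact Finset.mem_range.mp (Finset.mem_filter.mp hu).1
  omega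

theorem stmt12_general (p q : ℕ) (hp : p.Prime) (hq : q.Prime) :
    ¬ IsHamiltonianGraph (zdGraph (ZMod (p ^ 2 * q ^ 2))) := by
  rw [show p ^ 2 * q ^ 2 = p * (p * q ^ 2) by ring]
  exact not_isHamiltonianGraph_zdGraph_zmod hp.one_lt (dvd_mul_right p _) (hp.le_totient_mul_sq hq)

theorem stmt12 (p q : ℕ) (hp : p.Prime) (hq : q.Prime) (hpq : p < q) :
    ¬ IsHamiltonianGraph (zdGraph (ZMod (p ^ 2 * q ^ 2))) :=
  stmt12_general p q hp hq
end

section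
/- For every integer m ≥ 2, the line graph L(Γ(ℤ_{2^m}[i])) of the zero-divisor graph of the Gaussian integers modulo 2^m is pancyclic. -/
open SimpleGraph

/-!
In `R = ℤ[i]/⟨2^m⟩` the element `π = 1 + i` satisfies `π² = 2i`, so `R` is a local ring whose
maximal ideal `(π)` has nilpotency index `2m`, and every nonzero element is `π^a u` with `u` a
unit and `a < 2m`. Hence the vertices of `Γ(R)` are the nonzero multiples of `π`, the vertex
`w = π^(2m-1)` is adjacent to all others, and every edge not at `w` has an endpoint divisible by
`π^m`; these endpoints form a clique `S`.

In the line graph the edges at `w` form a clique of size `|Γ| - 1`. The other edges can be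
listed as a path of `L(Γ)`: run through `S = s₁, s₂, …`, listing at each `sᵢ` its edges not yet
listed and ending with `sᵢsᵢ₊₁`. Short cycles lie in the clique; a cycle of length `|Γ| - 1 + j`
follows the first `j` edges of the path and returns through all the edges at `w`, entering at
`wx` and leaving at `wy` for endpoints `x ≠ y` of the last and the first path edge.
-/

theorem List.exists_perm_cons_append_singleton {α : Type*} {l : List α} {a b : α} (ha : a ∈ l)
    (hb : b ∈ l) (hab : a ≠ b) : ∃ t, (a :: (t ++ [b])).Perm l := by
  classical
  refine ⟨(l.erase a).erase b, ?_⟩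
  have hb' : b ∈ l.erase a := (List.mem_erase_of_ne (Ne.symm hab)).mpr hb
  exact ((List.perm_append_singleton _ _).cons a).trans
    (((List.perm_cons_erase hb').symm.cons a).trans (List.perm_cons_erase ha).symm)

theorem Finset.exists_nodup_getLast?_eq {α : Type*} (T : Finset α) {x : α} (hx : x ∈ T) :
    ∃ l : List α, l.Nodup ∧ (∀ y, y ∈ l ↔ y ∈ T) ∧ l.getLast? = some x := by
  classical
  refine ⟨(T.erase x).toList ++ [x], ?_, fun y => ?_, List.getLast?_concat⟩
  · exact (T.erase x).nodup_toList.append (List.nodup_singleton x) (by simp)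
  · by_cases h : y = x <;> simp [h, hx]

theorem Sym2.exists_mem_ne {α : Type*} {z : Sym2 α} (hz : ¬z.IsDiag) (x : α) :
    ∃ y ∈ z, y ≠ x := by
  by_cases hx : x ∈ z
  · exact ⟨_, Sym2.other_mem hx, Sym2.other_ne hz hx⟩
  · exact ⟨_, Sym2.out_fst_mem z, fun h => hx (h ▸ Sym2.out_fst_mem z)⟩

namespace SimpleGraph

section Cycles

variable {W : Type*} {H : SimpleGraph W}

theorem hasCycleLength_of_isChain {l : List W} (hl : l.IsChain H.Adj) (hnd : l.Nodup)
    (h3 : 3 ≤ l.length) (hclose : ∀ a ∈ l.getLast?, ∀ b ∈ l.head?, H.Adj a b) :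
    HasCycleLength H l.length := by
  have hne : l ≠ [] := List.ne_nil_of_length_pos (by omega)
  have hadj : H.Adj (l.getLast hne) (l.head hne) :=
    hclose _ (List.getLast?_eq_some_getLast hne) _ (List.head?_eq_some_head hne)
  refine ⟨_, .cons hadj (Walk.ofSupport l hne hl), ?_, by simp; omega⟩
  rw [Walk.isCycle_iff_isPath_tail_and_le_length]
  exact ⟨by simpa [Walk.isPath_def] using hnd, by simp; omega⟩

theorem hasCycleLength_of_pairwise {l : List W} (hl : l.Pairwise H.Adj) {k : ℕ} (hk3 : 3 ≤ k)
    (hk : k ≤ l.length) : HasCycleLength H k := by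
  have ht : (l.take k).Pairwise H.Adj := hl.sublist (List.take_sublist _ _)
  have hlen : (l.take k).length = k := List.length_take_of_le hk
  rw [← hlen]
  refine hasCycleLength_of_isChain ht.isChain (ht.imp H.ne_of_adj) (by omega) fun a ha b hb => ?_
  obtain ⟨x, y, t, hxyt⟩ : ∃ x y t, l.take k = x :: y :: t := by
    match l.take k, hlen with
    | x :: y :: t, _ => exact ⟨x, y, t, rfl⟩
    | [], h | [_], h => simp at h; omega
  rw [hxyt, List.getLast?_cons_cons] at ha
  rw [hxyt, List.head?_cons, Option.mem_some_iff] at hb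
  rw [hxyt, List.pairwise_cons] at ht
  exact (hb ▸ ht.1 a (List.mem_of_getLast? ha)).symm

theorem hasCycleLength_append {P K : List W} (hP : P.IsChain H.Adj) (hK : K.Pairwise H.Adj)
    (hnd : (P ++ K).Nodup) (hP₀ : P ≠ []) {a b : W} (ha : a ∈ K) (hb : b ∈ K) (hab : a ≠ b)
    (hPa : H.Adj (P.getLast hP₀) a) (hbP : H.Adj b (P.head hP₀)) :
    HasCycleLength H (P.length + K.length) := by
  obtain ⟨t, hperm⟩ := List.exists_perm_cons_append_singleton ha hb hab
  have hK' : (a :: (t ++ [b])).Pairwise H.Adj := hK.perm hperm.symm fun h => h.symm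
  rw [← hperm.length_eq, ← List.length_append]
  refine hasCycleLength_of_isChain ?_ ((hperm.append_left P).nodup_iff.mpr hnd) ?_ ?_
  · refine List.isChain_append.mpr ⟨hP, hK'.isChain, fun e he c hc => ?_⟩
    rw [List.head?_cons, Option.mem_some_iff] at hc
    rw [List.getLast?_eq_some_getLast hP₀, Option.mem_some_iff] at he
    exact he ▸ hc ▸ hPa
  · have := List.length_pos_of_ne_nil hP₀
    simp only [List.length_append, List.length_cons]
    omega
  · intro e he f hf
    rw [List.getLast?_append_of_ne_nil _ (List.cons_ne_nil _ _), ← List.cons_append,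
      List.getLast?_concat, Option.mem_some_iff] at he
    rw [List.head?_append_of_ne_nil _ hP₀, List.head?_eq_some_head hP₀,
      Option.mem_some_iff] at hf
    exact he ▸ hf ▸ hbP

theorem pancyclic_of_pairwise_of_isChain [Finite W] {K P : List W} (hK : K.Pairwise H.Adj)
    (hK3 : 3 ≤ K.length) (hP : P.IsChain H.Adj) (hnd : (K ++ P).Nodup) (hmem : ∀ v, v ∈ K ++ P)
    (hlink : ∀ e ∈ P, ∀ f ∈ P, ∃ a ∈ K, ∃ b ∈ K, a ≠ b ∧ H.Adj e a ∧ H.Adj b f) :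
    Pancyclic H := by
  classical
  have hcard : Nat.card W = K.length + P.length := by
    rw [← List.length_append, ← Nat.card_fin (K ++ P).length]
    exact Nat.card_congr (hnd.getEquivOfForallMemList _ hmem).symm
  refine ⟨by omega, fun k hk3 hk => ?_⟩
  rcases le_or_gt k K.length with hkK | hKk
  · exact hasCycleLength_of_pairwise hK hk3 hkK
  set P' := P.take (k - K.length)
  have hP'len : P'.length = k - K.length := List.length_take_of_le (by omega)
  have hP'₀ : P' ≠ [] := List.ne_nil_of_length_pos (by omega)
  obtain ⟨a, ha, b, hb, hab, hea, hbf⟩ := hlink _ (List.mem_of_mem_take (List.getLast_mem hP'₀))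
    _ (List.mem_of_mem_take (List.head_mem hP'₀))
  have hnd' : (P' ++ K).Nodup :=
    ((List.take_sublist _ P).append_right K).nodup (List.nodup_append_comm.mp hnd)
  have := hasCycleLength_append (hP.take _) hK hnd' hP'₀ ha hb hab hea hbf
  rwa [hP'len, Nat.sub_add_cancel hKk.le] at this

end Cycles

section LineGraph

variable {V : Type*} {G : SimpleGraph V}

theorem lineGraph_adj_of_mem {e f : G.edgeSet} {x : V} (he : x ∈ (e : Sym2 V))
    (hf : x ∈ (f : Sym2 V)) (hef : e ≠ f) : G.lineGraph.Adj e f :=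
  lineGraph_adj_iff_exists.mpr ⟨hef, x, he, hf⟩

theorem pairwise_lineGraph_adj_of_mem {l : List G.edgeSet} (hl : l.Nodup) {x : V}
    (hx : ∀ e ∈ l, x ∈ (e : Sym2 V)) : l.Pairwise G.lineGraph.Adj :=
  hl.imp_of_mem fun he hf hef => lineGraph_adj_of_mem (hx _ he) (hx _ hf) hef

theorem pancyclic_lineGraph_of_forall_adj [Finite V] {w : V} (hw : ∀ v, v ≠ w → G.Adj w v)
    (hV : 4 ≤ Nat.card V) {P : List G.edgeSet} (hP : P.IsChain G.lineGraph.Adj) (hnd : P.Nodup)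
    (hmem : ∀ e, e ∈ P ↔ w ∉ (e : Sym2 V)) : Pancyclic G.lineGraph := by
  classical
  have := Fintype.ofFinite V
  let star : {v // v ≠ w} → G.edgeSet := fun v => ⟨s(w, v), hw v v.2⟩
  have hstar : star.Injective := fun u v h =>
    Subtype.ext (Sym2.congr_right.mp (congrArg Subtype.val h))
  set K := (Finset.univ : Finset {v // v ≠ w}).toList.map star
  have hKmem : ∀ v, star v ∈ K := fun v =>
    List.mem_map.mpr ⟨v, Finset.mem_toList.mpr (Finset.mem_univ _), rfl⟩
  have hKnd : K.Nodup := (Finset.nodup_toList _).map hstar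
  have hKw : ∀ e ∈ K, w ∈ (e : Sym2 V) := by
    simp only [K, List.mem_map]
    rintro _ ⟨v, -, rfl⟩
    exact Sym2.mem_mk_left _ _
  have hKlen : K.length = Nat.card V - 1 := by simp [K, Nat.card_eq_fintype_card]
  refine pancyclic_of_pairwise_of_isChain (pairwise_lineGraph_adj_of_mem hKnd hKw) (by omega) hP
    (List.nodup_append.mpr ⟨hKnd, hnd, fun e he f hf hef => (hmem f).mp hf (hef ▸ hKw e he)⟩)
    (fun e => ?_) (fun e he f hf => ?_)
  · by_cases hwe : w ∈ (e : Sym2 V)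
    · obtain ⟨v, hv⟩ := Sym2.mem_iff_exists.mp hwe
      have hvw : v ≠ w := by
        rintro rfl
        exact G.not_isDiag_of_mem_edgeSet e.2 (hv ▸ Sym2.mk_isDiag_iff.mpr rfl)
      exact List.mem_append_left _ ((Subtype.ext hv.symm : star ⟨v, hvw⟩ = e) ▸ hKmem _)
    · exact List.mem_append_right _ ((hmem e).mpr hwe)
  · obtain ⟨x, hx⟩ : ∃ x, x ∈ (e : Sym2 V) := ⟨_, Sym2.out_fst_mem _⟩
    obtain ⟨y, hy, hyx⟩ := Sym2.exists_mem_ne (G.not_isDiag_of_mem_edgeSet f.2) x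
    have hxw : x ≠ w := fun h => (hmem e).mp he (h ▸ hx)
    have hyw : y ≠ w := fun h => (hmem f).mp hf (h ▸ hy)
    refine ⟨star ⟨x, hxw⟩, hKmem _, star ⟨y, hyw⟩, hKmem _,
      fun h => hyx (congrArg Subtype.val (hstar h)).symm, ?_, ?_⟩
    · exact lineGraph_adj_of_mem hx (Sym2.mem_mk_right _ _)
        fun h => (hmem e).mp he (h ▸ Sym2.mem_mk_left _ _)
    · exact lineGraph_adj_of_mem (Sym2.mem_mk_right _ _) hy
        fun h => (hmem f).mp hf (h ▸ Sym2.mem_mk_left _ _)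

theorem exists_isChain_lineGraph_of_isChain (S : List V) (F : Finset G.edgeSet) (hSnd : S.Nodup)
    (hS : S.IsChain G.Adj)
    (hSF : ∀ a ∈ S, ∀ b ∈ S, ∀ h : G.Adj a b, (⟨s(a, b), h⟩ : G.edgeSet) ∈ F)
    (hF : ∀ e ∈ F, ∃ v ∈ S, v ∈ (e : Sym2 V)) :
    ∃ P : List G.edgeSet, P.Nodup ∧ (∀ e, e ∈ P ↔ e ∈ F) ∧ P.IsChain G.lineGraph.Adj ∧
      ∀ e ∈ P.head?, ∀ v ∈ S.head?, v ∈ (e : Sym2 V) := by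
  classical
  induction S generalizing F with
  | nil =>
    refine ⟨[], List.nodup_nil, fun e => ⟨nofun, fun he => ?_⟩, List.isChain_nil, by simp⟩
    obtain ⟨v, hv, -⟩ := hF e he
    simp at hv
  | cons s S' ih =>
    cases S' with
    | nil =>
      have hFs : ∀ e ∈ F.toList, s ∈ (e : Sym2 V) := fun e he => by
        simpa using hF e (Finset.mem_toList.mp he)
      refine ⟨F.toList, F.nodup_toList, by simp, ?_, fun e he v hv => ?_⟩
      · exact (pairwise_lineGraph_adj_of_mem F.nodup_toList hFs).isChain
      · rw [List.head?_cons, Option.mem_some_iff] at hv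
        exact hv ▸ hFs e (List.mem_of_mem_head? he)
    | cons s₂ S'' =>
      rw [List.nodup_cons] at hSnd
      obtain ⟨hss₂, hS'⟩ := List.isChain_cons_cons.mp hS
      set Fs := F.filter fun e : G.edgeSet => s ∈ (e : Sym2 V)
      set F' := F.filter fun e : G.edgeSet => s ∉ (e : Sym2 V)
      have hSF' : ∀ a ∈ s₂ :: S'', ∀ b ∈ s₂ :: S'', ∀ h : G.Adj a b,
          (⟨s(a, b), h⟩ : G.edgeSet) ∈ F' := fun a ha b hb h => by
        refine Finset.mem_filter.mpr ⟨hSF a (.tail _ ha) b (.tail _ hb) h, fun hs => ?_⟩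
        rcases Sym2.mem_iff.mp hs with rfl | rfl
        exacts [hSnd.1 ha, hSnd.1 hb]
      have hF' : ∀ e ∈ F', ∃ v ∈ s₂ :: S'', v ∈ (e : Sym2 V) := fun e he => by
        obtain ⟨heF, hse⟩ := Finset.mem_filter.mp he
        obtain ⟨v, hv, hve⟩ := hF e heF
        rcases List.mem_cons.mp hv with rfl | hv
        exacts [absurd hve hse, ⟨v, hv, hve⟩]
      obtain ⟨P', hP'nd, hP'mem, hP'chain, hP'head⟩ := ih F' hSnd.2 hS' hSF' hF'
      have hP's : ∀ e ∈ P', s ∉ (e : Sym2 V) := fun e he =>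
        (Finset.mem_filter.mp ((hP'mem e).mp he)).2
      have hep : ⟨s(s, s₂), hss₂⟩ ∈ Fs := Finset.mem_filter.mpr
        ⟨hSF s List.mem_cons_self s₂ (.tail _ List.mem_cons_self) hss₂, Sym2.mem_mk_left _ _⟩
      obtain ⟨Q, hQnd, hQmem, hQlast⟩ := Fs.exists_nodup_getLast?_eq hep
      have hQs : ∀ e ∈ Q, s ∈ (e : Sym2 V) := fun e he =>
        (Finset.mem_filter.mp ((hQmem e).mp he)).2
      refine ⟨Q ++ P', List.nodup_append.mpr ⟨hQnd, hP'nd, fun e he f hf hef =>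
        hP's f hf (hef ▸ hQs e he)⟩, fun e => ?_, ?_, fun e he v hv => ?_⟩
      · rw [List.mem_append, hQmem, hP'mem, ← Finset.mem_union, Finset.filter_union_filter_not_eq]
      · refine List.isChain_append.mpr ⟨(pairwise_lineGraph_adj_of_mem hQnd hQs).isChain,
          hP'chain, fun e he f hf => ?_⟩
        rw [hQlast, Option.mem_some_iff] at he
        subst he
        exact lineGraph_adj_of_mem (Sym2.mem_mk_right _ _) (hP'head f hf s₂ rfl)
          fun h => hP's f (List.mem_of_mem_head? hf) (h ▸ Sym2.mem_mk_left _ _)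
      · have hQ₀ : Q ≠ [] := fun h => by simp [h] at hQlast
        rw [List.head?_append_of_ne_nil _ hQ₀] at he
        rw [List.head?_cons, Option.mem_some_iff] at hv
        exact hv ▸ hQs e (List.mem_of_mem_head? he)

end LineGraph

end SimpleGraph

section ChainRing

variable {R : Type*} [CommRing R] {π : R} {n : ℕ}

theorem isUnit_one_add_of_dvd (hn : π ^ n = 0) {t : R} (ht : π ∣ t) : IsUnit (1 + t) := by
  obtain ⟨s, rfl⟩ := ht
  exact IsNilpotent.isUnit_one_add ((Commute.all _ _).isNilpotent_mul_right ⟨n, hn⟩)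

theorem mul_eq_zero_of_pow_dvd (hn : π ^ n = 0) {x y : R} (hx : π ^ ((n + 1) / 2) ∣ x)
    (hy : π ^ ((n + 1) / 2) ∣ y) : x * y = 0 := by
  obtain ⟨s, rfl⟩ := hx
  obtain ⟨t, rfl⟩ := hy
  rw [mul_mul_mul_comm, ← pow_add, pow_eq_zero_of_le (by omega) hn, zero_mul]

/-- `R` is local with maximal ideal `(π)`, and `π` has nilpotency index exactly `n`. -/
structure IsChainRingUniformizer (π : R) (n : ℕ) : Prop where
  isUnit_or_dvd : ∀ x : R, IsUnit x ∨ π ∣ x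
  pow_eq_zero : π ^ n = 0
  pow_pred_ne_zero : π ^ (n - 1) ≠ 0

namespace IsChainRingUniformizer

theorem one_le (h : IsChainRingUniformizer π n) : 1 ≤ n := by
  by_contra h0
  obtain rfl : n = 0 := by omega
  exact h.pow_pred_ne_zero h.pow_eq_zero

theorem pow_mul_ne_zero (h : IsChainRingUniformizer π n) {a : ℕ} (ha : a < n) {u : R}
    (hu : IsUnit u) : π ^ a * u ≠ 0 := fun h0 =>
  h.pow_pred_ne_zero (pow_eq_zero_of_le (by omega) (hu.mul_left_eq_zero.mp h0))

theorem exists_eq_pow_mul (h : IsChainRingUniformizer π n) {x : R} (hx : x ≠ 0) :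
    ∃ a < n, ∃ u, IsUnit u ∧ x = π ^ a * u := by
  suffices ∀ k, π ^ k ∣ x ∨ ∃ a < k, ∃ u, IsUnit u ∧ x = π ^ a * u from
    (this n).resolve_left fun hdvd => hx (zero_dvd_iff.mp (h.pow_eq_zero ▸ hdvd))
  intro k
  induction k with
  | zero => exact .inl (pow_zero π ▸ one_dvd x)
  | succ k ih =>
    rcases ih with ⟨y, rfl⟩ | ⟨a, ha, u, hu, hxu⟩
    · rcases h.isUnit_or_dvd y with hy | ⟨z, rfl⟩
      · exact .inr ⟨k, k.lt_succ_self, y, hy, rfl⟩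
      · exact .inl ⟨z, by ring⟩
    · exact .inr ⟨a, by omega, u, hu, hxu⟩

theorem pow_pred_mul_eq_zero (h : IsChainRingUniformizer π n) {x : R} (hx : π ∣ x) :
    π ^ (n - 1) * x = 0 := by
  obtain ⟨t, rfl⟩ := hx
  rw [← mul_assoc, ← pow_succ, Nat.sub_add_cancel h.one_le, h.pow_eq_zero, zero_mul]

theorem mem_zdVertex_iff (h : IsChainRingUniformizer π n) {x : R} :
    x ∈ zdVertex R ↔ x ≠ 0 ∧ π ∣ x := by
  refine ⟨fun ⟨hx, y, hy, hxy⟩ => ⟨hx, ?_⟩, fun ⟨hx, hdvd⟩ =>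
    ⟨hx, π ^ (n - 1), h.pow_pred_ne_zero, by rw [mul_comm, h.pow_pred_mul_eq_zero hdvd]⟩⟩
  exact (h.isUnit_or_dvd x).resolve_left fun hu => hy (hu.mul_right_eq_zero.mp hxy)

theorem pow_dvd_or_pow_dvd_of_mul_eq_zero (h : IsChainRingUniformizer π n) {x y : R}
    (hxy : x * y = 0) (hx : x ≠ 0) (hy : y ≠ 0) :
    π ^ ((n + 1) / 2) ∣ x ∨ π ^ ((n + 1) / 2) ∣ y := by
  obtain ⟨a, -, u, hu, rfl⟩ := h.exists_eq_pow_mul hx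
  obtain ⟨b, -, v, hv, rfl⟩ := h.exists_eq_pow_mul hy
  have hab : n ≤ a + b := by
    by_contra hab
    exact h.pow_mul_ne_zero (not_le.mp hab) (hu.mul hv) (by rw [← hxy]; ring)
  rcases le_or_gt ((n + 1) / 2) a with ha | ha
  · exact .inl ((pow_dvd_pow π ha).mul_right u)
  · exact .inr ((pow_dvd_pow π (by omega)).mul_right v)

theorem four_le_card_zdVertex [Finite R] (h : IsChainRingUniformizer π n) (hn : 4 ≤ n) :
    4 ≤ Nat.card (zdVertex R) := by
  classical
  obtain ⟨k, rfl⟩ : ∃ k, n = k + 4 := ⟨n - 4, by omega⟩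
  have hne : ∀ {a : ℕ} {x y t : R}, a < k + 4 → π ∣ t → x - y = π ^ a * (1 + t) → x ≠ y :=
    fun ha ht hxy he => h.pow_mul_ne_zero ha (isUnit_one_add_of_dvd h.pow_eq_zero ht)
      (by rw [← hxy, he, sub_self])
  have hmem : ∀ {a : ℕ} {x t : R}, 0 < a → a < k + 4 → π ∣ t → x = π ^ a * (1 + t) →
      x ∈ zdVertex R := fun ha0 ha ht hx =>
    h.mem_zdVertex_iff.mpr ⟨hx ▸ h.pow_mul_ne_zero ha (isUnit_one_add_of_dvd h.pow_eq_zero ht),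
      hx ▸ (dvd_pow_self π ha0.ne').mul_right _⟩
  let l : List R := [π, π ^ 2, π + π ^ 2, π ^ (k + 3)]
  have hl : l.Nodup := by
    simp only [l, List.nodup_cons, List.mem_cons, List.not_mem_nil, or_false, not_or,
      not_false_eq_true, and_true, List.nodup_nil]
    refine ⟨⟨?_, ?_, ?_⟩, ⟨?_, ?_⟩, ?_⟩
    · exact hne (a := 1) (t := -π) (by omega) (dvd_neg.mpr dvd_rfl) (by ring)
    · exact (hne (a := 2) (t := 0) (by omega) (dvd_zero π) (by ring)).symm
    · exact hne (a := 1) (t := -π ^ (k + 2)) (by omega)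
        (dvd_neg.mpr (dvd_pow_self π (by omega))) (by ring)
    · exact (hne (a := 1) (t := 0) (by omega) (dvd_zero π) (by ring)).symm
    · exact hne (a := 2) (t := -π ^ (k + 1)) (by omega)
        (dvd_neg.mpr (dvd_pow_self π (by omega))) (by ring)
    · exact hne (a := 1) (t := π - π ^ (k + 2)) (by omega)
        (dvd_sub dvd_rfl (dvd_pow_self π (by omega))) (by ring)
  have hsub : (l.toFinset : Set R) ⊆ zdVertex R := by
    intro x hx
    simp only [l, List.coe_toFinset, List.mem_cons, List.not_mem_nil, or_false,
      Set.mem_ofPred_eq] at hx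
    rcases hx with hx | hx | hx | hx
    · exact hmem (a := 1) (t := 0) (by omega) (by omega) (dvd_zero π) (by rw [hx]; ring)
    · exact hmem (a := 2) (t := 0) (by omega) (by omega) (dvd_zero π) (by rw [hx]; ring)
    · exact hmem (a := 1) (t := π) (by omega) (by omega) dvd_rfl (by rw [hx]; ring)
    · exact hmem (a := k + 3) (t := 0) (by omega) (by omega) (dvd_zero π) (by rw [hx]; ring)
  calc 4 = Nat.card (l.toFinset : Set R) := by
        rw [Nat.card_coe_set_eq, Set.ncard_coe_finset, List.toFinset_card_of_nodup hl]; rfl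
    _ ≤ Nat.card (zdVertex R) := Nat.card_mono (Set.toFinite _) hsub

theorem pancyclic_lineGraph_zdGraph [Finite R] (h : IsChainRingUniformizer π n) (hn : 4 ≤ n) :
    Pancyclic (zdGraph R).lineGraph := by
  classical
  have := Fintype.ofFinite (zdVertex R)
  have := Fintype.ofFinite (zdGraph R).edgeSet
  have hvert : ∀ v : zdVertex R, (v : R) ≠ 0 ∧ π ∣ v := fun v => h.mem_zdVertex_iff.mp v.2
  let w : zdVertex R := ⟨π ^ (n - 1),
    h.mem_zdVertex_iff.mpr ⟨h.pow_pred_ne_zero, dvd_pow_self π (by omega)⟩⟩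
  have hw : ∀ v, v ≠ w → (zdGraph R).Adj w v := fun v hv =>
    ⟨hv.symm, h.pow_pred_mul_eq_zero (hvert v).2⟩
  let S : Finset (zdVertex R) := Finset.univ.filter fun v => v ≠ w ∧ π ^ ((n + 1) / 2) ∣ (v : R)
  have hSmem : ∀ v, v ∈ S.toList ↔ v ≠ w ∧ π ^ ((n + 1) / 2) ∣ (v : R) := by simp [S]
  have hS : S.toList.Pairwise (zdGraph R).Adj := S.nodup_toList.imp_of_mem fun ha hb hab =>
    ⟨hab, mul_eq_zero_of_pow_dvd h.pow_eq_zero ((hSmem _).mp ha).2 ((hSmem _).mp hb).2⟩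
  let F : Finset (zdGraph R).edgeSet := Finset.univ.filter fun e => w ∉ (e : Sym2 (zdVertex R))
  have hSF : ∀ a ∈ S.toList, ∀ b ∈ S.toList, ∀ hab : (zdGraph R).Adj a b,
      (⟨s(a, b), hab⟩ : (zdGraph R).edgeSet) ∈ F := fun a ha b hb hab => by
    simp only [F, Finset.mem_filter, Finset.mem_univ, true_and, Sym2.mem_iff, not_or]
    exact ⟨Ne.symm ((hSmem a).mp ha).1, Ne.symm ((hSmem b).mp hb).1⟩
  have hF : ∀ e ∈ F, ∃ v ∈ S.toList, v ∈ (e : Sym2 (zdVertex R)) := by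
    rintro ⟨e, he⟩ heF
    induction e using Sym2.ind with
    | _ a b =>
      simp only [F, Finset.mem_filter, Finset.mem_univ, true_and, Sym2.mem_iff, not_or] at heF
      rcases h.pow_dvd_or_pow_dvd_of_mul_eq_zero he.2 (hvert a).1 (hvert b).1 with hdvd | hdvd
      · exact ⟨a, (hSmem a).mpr ⟨Ne.symm heF.1, hdvd⟩, Sym2.mem_mk_left a b⟩
      · exact ⟨b, (hSmem b).mpr ⟨Ne.symm heF.2, hdvd⟩, Sym2.mem_mk_right a b⟩
  obtain ⟨P, hPnd, hPmem, hP, -⟩ :=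
    SimpleGraph.exists_isChain_lineGraph_of_isChain S.toList F S.nodup_toList hS.isChain hSF hF
  exact SimpleGraph.pancyclic_lineGraph_of_forall_adj hw (h.four_le_card_zdVertex hn) hP hPnd
    fun e => by simp [hPmem, F]

end IsChainRingUniformizer

end ChainRing

instance Zi.instFinite (n : ℕ) [NeZero n] : Finite (Zi n) := by
  refine Finite.of_surjective (fun p : ZMod n × ZMod n =>
    Ideal.Quotient.mk _ (⟨p.1.val, p.2.val⟩ : GaussianInt)) fun x => ?_
  obtain ⟨z, rfl⟩ := Ideal.Quotient.mk_surjective x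
  refine ⟨(z.re, z.im), Ideal.Quotient.eq.mpr (Ideal.mem_span_singleton.mpr ?_)⟩
  rw [show (n : GaussianInt) = ((n : ℤ) : GaussianInt) by norm_cast, Zsqrtd.intCast_dvd]
  simp only [ZMod.val_intCast, Zsqrtd.re_sub, Zsqrtd.im_sub]
  exact ⟨(Int.mod_modEq _ _).symm.dvd, (Int.mod_modEq _ _).symm.dvd⟩

namespace GaussianInt

local notation "ϖ" => (⟨1, 1⟩ : GaussianInt)

theorem associated_two_pow (m : ℕ) : Associated ((2 : GaussianInt) ^ m) (ϖ ^ (2 * m)) := by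
  have hi : IsUnit (⟨0, 1⟩ : GaussianInt) := IsUnit.of_mul_eq_one ⟨0, -1⟩ (by ext <;> simp)
  rw [pow_mul]
  exact Associated.pow_pow ⟨hi.unit, by ext <;> simp [sq]⟩

theorem dvd_of_even {z : GaussianInt} (hz : Even (z.re + z.im)) : ϖ ∣ z := by
  obtain ⟨k, hk⟩ := hz
  exact ⟨⟨k, k - z.re⟩, by ext <;> simp; omega⟩

theorem dvd_or_dvd_sub_one (z : GaussianInt) : ϖ ∣ z ∨ ϖ ∣ z - 1 := by
  rcases Int.even_or_odd (z.re + z.im) with h | h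
  · exact .inl (dvd_of_even h)
  · refine .inr (dvd_of_even ?_)
    simpa [sub_add_eq_add_sub, Int.even_sub_one, ← Int.not_even_iff_odd] using h

theorem not_isUnit_one_add_I : ¬IsUnit ϖ := by
  rw [Zsqrtd.isUnit_iff_norm_isUnit, Int.isUnit_iff]
  decide

theorem isChainRingUniformizer (m : ℕ) (hm : 1 ≤ m) :
    IsChainRingUniformizer (Ideal.Quotient.mk _ ϖ : Zi (2 ^ m)) (2 * m) := by
  have hzero : ∀ z, (Ideal.Quotient.mk _ z : Zi (2 ^ m)) = 0 ↔ ϖ ^ (2 * m) ∣ z := fun z => by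
    rw [Ideal.Quotient.eq_zero_iff_dvd, ← (associated_two_pow m).dvd_iff_dvd_left]
    push_cast; rfl
  have hn : (Ideal.Quotient.mk _ ϖ : Zi (2 ^ m)) ^ (2 * m) = 0 := by
    rw [← map_pow, hzero]
  refine ⟨fun x => ?_, hn, ?_⟩
  · obtain ⟨z, rfl⟩ := Ideal.Quotient.mk_surjective x
    rcases dvd_or_dvd_sub_one z with h | h
    · exact .inr (map_dvd _ h)
    · rw [← add_sub_cancel (1 : GaussianInt) z, map_add, map_one]
      exact .inl (isUnit_one_add_of_dvd hn (map_dvd _ h))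
  · rw [← map_pow, Ne, hzero, pow_dvd_pow_iff (by decide) not_isUnit_one_add_I]
    omega

end GaussianInt

theorem stmt17 (m : ℕ) (hm : 2 ≤ m) :
    Pancyclic (lineGraph (zdGraph (Zi (2 ^ m)))) :=
  (GaussianInt.isChainRingUniformizer m (by omega)).pancyclic_lineGraph_zdGraph (by omega)
end
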